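/- arXiv:1406.5430 — 5 statements merged into one kernel-verified Lean document; each statement's English description precedes it below -/
import Mathlib

section
/- Suppose in addition that g·(f″)² is not identically zero on [X_0, X_n] (so that α_h > 0 for every choice of interior points). Then there exists a constant C > 0, depending only on f, g, X_0 and X_n but not on n or on the interior points X_1,…,X_{n−1}, such that for every n ≥ 1 and every choice of interior points X_1 < ⋯ < X_{n−1} satisfying the equidistribution equation with γ = 2/5, one has sqrt( Σ_{i=0}^{n−1} ∫_{X_i}^{X_{i+1}} (L_i(S) − f(S))² g(S) dS ) ≤ C n^{−2}. -/
open MeasureTheory intervalIntegral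

/-- `Ĝ_i` transported to the subinterval `[a, b]`:
`G(S) = Ĝ_i((S - a)/(b - a))` where `ĝ_i(ξ) = g(a + (b - a)ξ)` and
`Ĝ_i(t) = ∫_0^t ĝ_i(ξ) ξ²(1-ξ)³/3 dξ + ∫_t^1 ĝ_i(ξ) (1-ξ)²ξ³/3 dξ`. -/
noncomputable def weightG (g : ℝ → ℝ) (a b S : ℝ) : ℝ :=
    (∫ ξ in (0:ℝ)..((S - a) / (b - a)), g (a + (b - a) * ξ) * (ξ ^ 2 * (1 - ξ) ^ 3 / 3))
  + (∫ ξ in ((S - a) / (b - a))..(1:ℝ), g (a + (b - a) * ξ) * ((1 - ξ) ^ 2 * ξ ^ 3 / 3))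

/-- Linear interpolant of `f` on `[a, b]`:
`L(S) = ((b - S)/(b - a)) f(a) + ((S - a)/(b - a)) f(b)`. -/
noncomputable def splineL (f : ℝ → ℝ) (a b S : ℝ) : ℝ :=
  ((b - S) / (b - a)) * f a + ((S - a) / (b - a)) * f b

/-- The weighted curvature integral `∫_a^b G(S) (f″(S))² dS` on a subinterval `[a, b]`. -/
noncomputable def curvInt (f g : ℝ → ℝ) (a b : ℝ) : ℝ :=
  ∫ S in a..b, weightG g a b S * (deriv (deriv f) S) ^ 2

/-- The intensity parameter
`α_h = [(1/(X_n − X_0)) Σ_i h_i ((1/h_i) ∫_{X_i}^{X_{i+1}} G(S)(f″(S))² dS)^{γ/2}]^{2/γ}`. -/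
noncomputable def alphaH (f g : ℝ → ℝ) (γ : ℝ) (n : ℕ) (X : ℕ → ℝ) : ℝ :=
  ((1 / (X n - X 0)) * ∑ i ∈ Finset.range n, (X (i + 1) - X i) *
      ((1 / (X (i + 1) - X i)) * curvInt f g (X i) (X (i + 1))) ^ (γ / 2)) ^ (2 / γ)

/-- The adaptation function
`ρ_i = (1 + (1/(α_h h_i)) ∫_{X_i}^{X_{i+1}} G(S)(f″(S))² dS)^{γ/2}`. -/
noncomputable def rhoAdapt (f g : ℝ → ℝ) (γ : ℝ) (n : ℕ) (X : ℕ → ℝ) (i : ℕ) : ℝ :=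
  (1 + (1 / (alphaH f g γ n X * (X (i + 1) - X i))) * curvInt f g (X i) (X (i + 1))) ^ (γ / 2)

/-!
On a subinterval of length `h` the linear interpolant differs from `f` by at most
`sup |f''| * h ^ 2` (mean value theorem for `f` twice and for `f'` once), so the weighted squared
error is at most `sup |g| * sup |f''| ^ 2 * (max hᵢ) ^ 4 * (X n - X 0)`. Equidistribution controls
the mesh: as `ρᵢ ≥ 1`, `hᵢ ≤ hᵢ ρᵢ = (1 / n) * ∑ hⱼ ρⱼ`, and since `γ / 2 ≤ 1`, subadditivity of
`t ↦ t ^ (γ / 2)` bounds `∑ hⱼ ρⱼ` by `∑ hⱼ` plus `α_h ^ (-γ / 2) * ∑ hⱼ (cⱼ / hⱼ) ^ (γ / 2)`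
(`cⱼ = curvInt f g (X j) (X (j + 1))`), and the normalisation of `α_h` makes the latter equal to
`X n - X 0` as well. So `max hᵢ ≤ 2 (X n - X 0) / n`.
-/

open Set

section Interpolation

variable {f : ℝ → ℝ} {a b : ℝ}

theorem abs_splineL_sub_le {f' f'' : ℝ → ℝ} {C S : ℝ} (hab : a < b)
    (hfc : ContinuousOn f (Icc a b)) (hf : ∀ x ∈ Ioo a b, HasDerivAt f (f' x) x)
    (hf' : ∀ x ∈ Ioo a b, HasDerivAt f' (f'' x) x) (hC : ∀ x ∈ Ioo a b, |f'' x| ≤ C)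
    (hS : S ∈ Icc a b) : |splineL f a b S - f S| ≤ C * (b - a) ^ 2 := by
  have hC0 : 0 ≤ C := (abs_nonneg _).trans (hC ((a + b) / 2) ⟨by linarith, by linarith⟩)
  rcases hS.1.eq_or_lt with rfl | haS
  · have hba : b - a ≠ 0 := sub_ne_zero.2 hab.ne'
    simp only [splineL, div_self hba, one_mul, sub_self, zero_div, zero_mul, add_zero, abs_zero]
    exact mul_nonneg hC0 (sq_nonneg _)
  obtain ⟨c₁, hc₁, hslope₁⟩ := exists_hasDerivAt_eq_slope f f' hab hfc hf
  obtain ⟨c₂, hc₂, hslope₂⟩ := exists_hasDerivAt_eq_slope f f' haS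
    (hfc.mono (Icc_subset_Icc_right hS.2)) fun x hx ↦ hf x ⟨hx.1, hx.2.trans_le hS.2⟩
  have hc₂' : c₂ ∈ Ioo a b := ⟨hc₂.1, hc₂.2.trans_le hS.2⟩
  have hlip : |f' c₁ - f' c₂| ≤ C * (b - a) :=
    calc |f' c₁ - f' c₂| ≤ C * |c₁ - c₂| :=
          (convex_Ioo a b).norm_image_sub_le_of_norm_hasDerivWithin_le
            (fun x hx ↦ (hf' x hx).hasDerivWithinAt) hC hc₂' hc₁
      _ ≤ C * (b - a) := by
        gcongr
        exact (abs_sub_lt_iff.2 ⟨by linarith [hc₁.2, hc₂'.1], by linarith [hc₁.1, hc₂'.2]⟩).le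
  have herr : splineL f a b S - f S = (S - a) * (f' c₁ - f' c₂) := by
    rw [hslope₁, hslope₂]
    unfold splineL
    field_simp [(sub_pos.2 hab).ne', (sub_pos.2 haS).ne']
    ring
  calc |splineL f a b S - f S| = (S - a) * |f' c₁ - f' c₂| := by
        rw [herr, abs_mul, abs_of_pos (sub_pos.2 haS)]
    _ ≤ (b - a) * (C * (b - a)) := by gcongr; linarith [hS.2]
    _ = C * (b - a) ^ 2 := by ring

theorem integral_splineL_sub_sq_mul_le {f' f'' g : ℝ → ℝ} {C M : ℝ} (hab : a < b)
    (hfc : ContinuousOn f (Icc a b)) (hf : ∀ x ∈ Ioo a b, HasDerivAt f (f' x) x)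
    (hf' : ∀ x ∈ Ioo a b, HasDerivAt f' (f'' x) x) (hC : ∀ x ∈ Ioo a b, |f'' x| ≤ C)
    (hgc : ContinuousOn g (Icc a b)) (hM : ∀ x ∈ Icc a b, |g x| ≤ M) :
    ∫ S in a..b, (splineL f a b S - f S) ^ 2 * g S ≤ M * C ^ 2 * (b - a) ^ 5 := by
  have hM0 : 0 ≤ M := (abs_nonneg _).trans (hM a (left_mem_Icc.2 hab.le))
  have hint : IntervalIntegrable (fun S ↦ (splineL f a b S - f S) ^ 2 * g S) volume a b := by
    refine ContinuousOn.intervalIntegrable ?_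
    rw [uIcc_of_le hab.le]
    have hL : Continuous (splineL f a b) := by unfold splineL; fun_prop
    exact ((hL.continuousOn.sub hfc).pow 2).mul hgc
  have hpt : ∀ S ∈ Icc a b, (splineL f a b S - f S) ^ 2 * g S ≤ (C * (b - a) ^ 2) ^ 2 * M := by
    intro S hS
    have herr := abs_splineL_sub_le hab hfc hf hf' hC hS
    calc (splineL f a b S - f S) ^ 2 * g S ≤ |splineL f a b S - f S| ^ 2 * M := by
          rw [sq_abs]; gcongr; exact (le_abs_self _).trans (hM S hS)
      _ ≤ (C * (b - a) ^ 2) ^ 2 * M := by gcongr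
  calc ∫ S in a..b, (splineL f a b S - f S) ^ 2 * g S
      ≤ ∫ _ in a..b, (C * (b - a) ^ 2) ^ 2 * M :=
        intervalIntegral.integral_mono_on hab.le hint intervalIntegrable_const hpt
    _ = M * C ^ 2 * (b - a) ^ 5 := by rw [intervalIntegral.integral_const, smul_eq_mul]; ring

theorem ContDiffOn.hasDerivAt_deriv_of_mem_Ioo (hf : ContDiffOn ℝ 2 f (Icc a b)) {x : ℝ}
    (hx : x ∈ Ioo a b) : HasDerivAt f (deriv f x) x :=
  ((hf.contDiffAt (Icc_mem_nhds hx.1 hx.2)).differentiableAt (by norm_num)).hasDerivAt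

theorem ContDiffOn.hasDerivAt_deriv_deriv_of_mem_Ioo (hf : ContDiffOn ℝ 2 f (Icc a b)) {x : ℝ}
    (hx : x ∈ Ioo a b) : HasDerivAt (deriv f) (deriv (deriv f) x) x :=
  have hf' : ContDiffOn ℝ 1 (deriv f) (Ioo a b) :=
    (hf.mono Ioo_subset_Icc_self).deriv_of_isOpen isOpen_Ioo (by norm_num)
  ((hf'.differentiableOn one_ne_zero x hx).differentiableAt (isOpen_Ioo.mem_nhds hx)).hasDerivAt

theorem ContDiffOn.exists_abs_deriv_deriv_le (hf : ContDiffOn ℝ 2 f (Icc a b)) :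
    ∃ C, ∀ x ∈ Ioo a b, |deriv (deriv f) x| ≤ C := by
  rcases le_or_gt b a with hba | hab
  · exact ⟨0, fun x hx ↦ absurd (hx.1.trans hx.2) (not_lt.2 hba)⟩
  have hU : UniqueDiffOn ℝ (Icc a b) := uniqueDiffOn_Icc hab
  obtain ⟨C, hC⟩ := isCompact_Icc.exists_bound_of_continuousOn
    (hf.continuousOn_iteratedDerivWithin le_rfl hU)
  refine ⟨C, fun x hx ↦ ?_⟩
  have hx' : iteratedDerivWithin 2 f (Icc a b) x = deriv (deriv f) x := by
    rw [iteratedDerivWithin_eq_iteratedDeriv hU (hf.contDiffAt (Icc_mem_nhds hx.1 hx.2))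
      (Ioo_subset_Icc_self hx), iteratedDeriv_eq_iterate]
    rfl
  simpa [hx'] using hC x (Ioo_subset_Icc_self hx)

end Interpolation

section Partition

variable {n : ℕ} {X : ℕ → ℝ}

theorem monotoneOn_Iic_of_lt_succ (hX : ∀ i < n, X i < X (i + 1)) : MonotoneOn X (Iic n) :=
  (strictMonoOn_Iic_of_lt_succ fun m hm ↦ by
    simpa only [Order.succ_eq_add_one] using hX m hm).monotoneOn

theorem apply_zero_le_apply_of_lt_succ (hX : ∀ i < n, X i < X (i + 1)) : X 0 ≤ X n :=
  monotoneOn_Iic_of_lt_succ hX (Nat.zero_le n) self_mem_Iic (Nat.zero_le n)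

theorem Icc_subset_Icc_of_lt_succ (hX : ∀ i < n, X i < X (i + 1)) {i : ℕ} (hi : i < n) :
    Icc (X i) (X (i + 1)) ⊆ Icc (X 0) (X n) :=
  have hmono := monotoneOn_Iic_of_lt_succ hX
  Icc_subset_Icc (hmono (Nat.zero_le n) (mem_Iic.2 hi.le) (Nat.zero_le i))
    (hmono (mem_Iic.2 hi) (mem_Iic.2 le_rfl) hi)

theorem sum_pow_succ_le_pow_mul_sum {h : ℕ → ℝ} {δ : ℝ} (k : ℕ)
    (hh : ∀ i < n, 0 ≤ h i ∧ h i ≤ δ) :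
    ∑ i ∈ Finset.range n, h i ^ (k + 1) ≤ δ ^ k * ∑ i ∈ Finset.range n, h i := by
  rw [Finset.mul_sum]
  refine Finset.sum_le_sum fun i hi ↦ ?_
  obtain ⟨h0, hδ⟩ := hh i (Finset.mem_range.1 hi)
  rw [pow_succ]
  gcongr

theorem sum_integral_splineL_sub_sq_mul_le {f f' f'' g : ℝ → ℝ} {C M δ : ℝ}
    (hX : ∀ i < n, X i < X (i + 1)) (hfc : ContinuousOn f (Icc (X 0) (X n)))
    (hf : ∀ x ∈ Ioo (X 0) (X n), HasDerivAt f (f' x) x)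
    (hf' : ∀ x ∈ Ioo (X 0) (X n), HasDerivAt f' (f'' x) x)
    (hC : ∀ x ∈ Ioo (X 0) (X n), |f'' x| ≤ C)
    (hgc : ContinuousOn g (Icc (X 0) (X n))) (hM : ∀ x ∈ Icc (X 0) (X n), |g x| ≤ M)
    (hδ : ∀ i < n, X (i + 1) - X i ≤ δ) :
    ∑ i ∈ Finset.range n, ∫ S in (X i)..(X (i + 1)),
        (splineL f (X i) (X (i + 1)) S - f S) ^ 2 * g S ≤ M * C ^ 2 * δ ^ 4 * (X n - X 0) := by
  have hsub : ∀ i < n, Icc (X i) (X (i + 1)) ⊆ Icc (X 0) (X n) :=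
    fun i hi ↦ Icc_subset_Icc_of_lt_succ hX hi
  have hsub' : ∀ i < n, Ioo (X i) (X (i + 1)) ⊆ Ioo (X 0) (X n) :=
    fun i hi ↦ Ioo_subset_Ioo (hsub i hi (left_mem_Icc.2 (hX i hi).le)).1
      (hsub i hi (right_mem_Icc.2 (hX i hi).le)).2
  have hM0 : 0 ≤ M :=
    (abs_nonneg _).trans (hM _ (left_mem_Icc.2 (apply_zero_le_apply_of_lt_succ hX)))
  calc ∑ i ∈ Finset.range n, ∫ S in (X i)..(X (i + 1)),
        (splineL f (X i) (X (i + 1)) S - f S) ^ 2 * g S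
      ≤ ∑ i ∈ Finset.range n, M * C ^ 2 * (X (i + 1) - X i) ^ (4 + 1) := by
        refine Finset.sum_le_sum fun i hi ↦ ?_
        have hi := Finset.mem_range.1 hi
        exact integral_splineL_sub_sq_mul_le (hX i hi) (hfc.mono (hsub i hi))
          (fun x hx ↦ hf x (hsub' i hi hx)) (fun x hx ↦ hf' x (hsub' i hi hx))
          (fun x hx ↦ hC x (hsub' i hi hx)) (hgc.mono (hsub i hi)) fun x hx ↦ hM x (hsub i hi hx)
    _ ≤ M * C ^ 2 * (δ ^ 4 * ∑ i ∈ Finset.range n, (X (i + 1) - X i)) := by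
        rw [← Finset.mul_sum]
        gcongr
        exact sum_pow_succ_le_pow_mul_sum 4 fun i hi ↦ ⟨(sub_pos.2 (hX i hi)).le, hδ i hi⟩
    _ = M * C ^ 2 * δ ^ 4 * (X n - X 0) := by rw [Finset.sum_range_sub X n]; ring

end Partition

section Equidistribution

variable {f g : ℝ → ℝ} {a b γ : ℝ} {n : ℕ} {X : ℕ → ℝ}

theorem weightG_nonneg (hg : ∀ x ∈ Icc a b, 0 ≤ g x) (hab : a < b) {S : ℝ} (hS : S ∈ Icc a b) :
    0 ≤ weightG g a b S := by
  have hba : 0 < b - a := sub_pos.2 hab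
  have hτ0 : 0 ≤ (S - a) / (b - a) := div_nonneg (sub_nonneg.2 hS.1) hba.le
  have hτ1 : (S - a) / (b - a) ≤ 1 := (div_le_one hba).2 (by linarith [hS.2])
  have hg' : ∀ ξ, 0 ≤ ξ → ξ ≤ 1 → 0 ≤ g (a + (b - a) * ξ) := fun ξ h0 h1 ↦
    hg _ ⟨by nlinarith, by nlinarith⟩
  refine add_nonneg (intervalIntegral.integral_nonneg hτ0 fun ξ hξ ↦ ?_)
    (intervalIntegral.integral_nonneg hτ1 fun ξ hξ ↦ ?_)
  · have hgξ := hg' ξ hξ.1 (hξ.2.trans hτ1)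
    have hξ1 : 0 ≤ 1 - ξ := by linarith [hξ.2]
    positivity
  · have hξ0 : 0 ≤ ξ := hτ0.trans hξ.1
    have hgξ := hg' ξ hξ0 hξ.2
    have hξ1 : 0 ≤ 1 - ξ := by linarith [hξ.2]
    positivity

theorem curvInt_nonneg (hg : ∀ x ∈ Icc a b, 0 ≤ g x) (hab : a < b) : 0 ≤ curvInt f g a b :=
  intervalIntegral.integral_nonneg hab.le fun _ hS ↦
    mul_nonneg (weightG_nonneg hg hab hS) (sq_nonneg _)

noncomputable def curvMean (f g : ℝ → ℝ) (γ : ℝ) (n : ℕ) (X : ℕ → ℝ) : ℝ :=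
  (1 / (X n - X 0)) * ∑ i ∈ Finset.range n, (X (i + 1) - X i) *
    ((1 / (X (i + 1) - X i)) * curvInt f g (X i) (X (i + 1))) ^ (γ / 2)

variable (hX : ∀ i < n, X i < X (i + 1)) (hc : ∀ i < n, 0 ≤ curvInt f g (X i) (X (i + 1)))
include hX hc

theorem curvMean_nonneg : 0 ≤ curvMean f g γ n X := by
  refine mul_nonneg (one_div_nonneg.2 (sub_nonneg.2 (apply_zero_le_apply_of_lt_succ hX)))
    (Finset.sum_nonneg fun i hi ↦ ?_)
  have hi := Finset.mem_range.1 hi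
  have hh := (sub_pos.2 (hX i hi)).le
  exact mul_nonneg hh (Real.rpow_nonneg (mul_nonneg (one_div_nonneg.2 hh) (hc i hi)) _)

theorem alphaH_rpow (hγ : γ ≠ 0) : alphaH f g γ n X ^ (γ / 2) = curvMean f g γ n X := by
  change (curvMean f g γ n X ^ (2 / γ)) ^ (γ / 2) = _
  rw [← Real.rpow_mul (curvMean_nonneg hX hc), div_mul_div_comm, mul_comm,
    div_self (mul_ne_zero hγ two_ne_zero), Real.rpow_one]

theorem one_le_rhoAdapt (hγ : 0 ≤ γ) {i : ℕ} (hi : i < n) : 1 ≤ rhoAdapt f g γ n X i := by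
  have hα : 0 ≤ alphaH f g γ n X := Real.rpow_nonneg (curvMean_nonneg hX hc) _
  refine Real.one_le_rpow (le_add_of_nonneg_right (mul_nonneg ?_ (hc i hi))) (by positivity)
  exact one_div_nonneg.2 (mul_nonneg hα (sub_pos.2 (hX i hi)).le)

theorem rhoAdapt_le (hγ0 : 0 ≤ γ) (hγ2 : γ ≤ 2) {i : ℕ} (hi : i < n) :
    rhoAdapt f g γ n X i ≤ 1 + (alphaH f g γ n X ^ (γ / 2))⁻¹ *
      ((1 / (X (i + 1) - X i)) * curvInt f g (X i) (X (i + 1))) ^ (γ / 2) := by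
  have hα : 0 ≤ alphaH f g γ n X := Real.rpow_nonneg (curvMean_nonneg hX hc) _
  have hu : 0 ≤ (1 / (X (i + 1) - X i)) * curvInt f g (X i) (X (i + 1)) :=
    mul_nonneg (one_div_nonneg.2 (sub_pos.2 (hX i hi)).le) (hc i hi)
  have hsplit : 1 / (alphaH f g γ n X * (X (i + 1) - X i)) * curvInt f g (X i) (X (i + 1)) =
      (alphaH f g γ n X)⁻¹ * ((1 / (X (i + 1) - X i)) * curvInt f g (X i) (X (i + 1))) := by
    rw [one_div, mul_inv, one_div, mul_assoc]
  calc rhoAdapt f g γ n X i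
      ≤ 1 ^ (γ / 2) + ((alphaH f g γ n X)⁻¹ *
          ((1 / (X (i + 1) - X i)) * curvInt f g (X i) (X (i + 1)))) ^ (γ / 2) := by
        rw [rhoAdapt, hsplit]
        exact Real.rpow_add_le_add_rpow zero_le_one (mul_nonneg (inv_nonneg.2 hα) hu)
          (by positivity) (by linarith)
    _ = _ := by rw [Real.one_rpow, Real.mul_rpow (inv_nonneg.2 hα) hu, Real.inv_rpow hα]

theorem sum_mul_rhoAdapt_le (hγ0 : 0 < γ) (hγ2 : γ ≤ 2) :
    ∑ j ∈ Finset.range n, (X (j + 1) - X j) * rhoAdapt f g γ n X j ≤ 2 * (X n - X 0) := by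
  set T := ∑ j ∈ Finset.range n, (X (j + 1) - X j) *
    ((1 / (X (j + 1) - X j)) * curvInt f g (X j) (X (j + 1))) ^ (γ / 2)
  have hB : alphaH f g γ n X ^ (γ / 2) = (X n - X 0)⁻¹ * T := by
    rw [alphaH_rpow hX hc hγ0.ne', curvMean, one_div]
  calc ∑ j ∈ Finset.range n, (X (j + 1) - X j) * rhoAdapt f g γ n X j
      ≤ ∑ j ∈ Finset.range n, ((X (j + 1) - X j) + (alphaH f g γ n X ^ (γ / 2))⁻¹ *
          ((X (j + 1) - X j) *
            ((1 / (X (j + 1) - X j)) * curvInt f g (X j) (X (j + 1))) ^ (γ / 2))) := by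
        refine Finset.sum_le_sum fun j hj ↦ ?_
        have hj := Finset.mem_range.1 hj
        calc (X (j + 1) - X j) * rhoAdapt f g γ n X j
            ≤ (X (j + 1) - X j) * (1 + (alphaH f g γ n X ^ (γ / 2))⁻¹ *
              ((1 / (X (j + 1) - X j)) * curvInt f g (X j) (X (j + 1))) ^ (γ / 2)) :=
              mul_le_mul_of_nonneg_left (rhoAdapt_le hX hc hγ0.le hγ2 hj) (sub_pos.2 (hX j hj)).le
          _ = _ := by ring
    _ = (X n - X 0) + (X n - X 0) * (T⁻¹ * T) := by
        rw [Finset.sum_add_distrib, ← Finset.mul_sum, Finset.sum_range_sub X n, hB, mul_inv,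
          inv_inv, mul_assoc]
    _ ≤ (X n - X 0) + (X n - X 0) * 1 := by
        gcongr
        exacts [sub_nonneg.2 (apply_zero_le_apply_of_lt_succ hX), inv_mul_le_one]
    _ = 2 * (X n - X 0) := by ring

theorem sub_le_of_equidistributed (hγ0 : 0 < γ) (hγ2 : γ ≤ 2)
    (heq : ∀ i < n, (X (i + 1) - X i) * rhoAdapt f g γ n X i =
      (1 / (n : ℝ)) * ∑ j ∈ Finset.range n, (X (j + 1) - X j) * rhoAdapt f g γ n X j)
    {i : ℕ} (hi : i < n) : X (i + 1) - X i ≤ 2 * (X n - X 0) / n :=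
  calc X (i + 1) - X i ≤ (X (i + 1) - X i) * rhoAdapt f g γ n X i :=
        le_mul_of_one_le_right (sub_pos.2 (hX i hi)).le (one_le_rhoAdapt hX hc hγ0.le hi)
    _ = (1 / (n : ℝ)) * ∑ j ∈ Finset.range n, (X (j + 1) - X j) * rhoAdapt f g γ n X j := heq i hi
    _ ≤ (1 / (n : ℝ)) * (2 * (X n - X 0)) := by gcongr; exact sum_mul_rhoAdapt_le hX hc hγ0 hγ2
    _ = 2 * (X n - X 0) / n := by ring

end Equidistribution

theorem equidistribution_convergence_rate_general
    (Xlo Xhi : ℝ) (hlt : Xlo < Xhi)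
    (f g : ℝ → ℝ)
    (hf : ContDiffOn ℝ 2 f (Set.Icc Xlo Xhi))
    (hg0 : ∀ S ∈ Set.Icc Xlo Xhi, 0 ≤ g S)
    (hgc : ContinuousOn g (Set.Icc Xlo Xhi)) :
    ∃ C > 0, ∀ n : ℕ, 1 ≤ n → ∀ X : ℕ → ℝ, X 0 = Xlo → X n = Xhi →
      (∀ i < n, X i < X (i + 1)) →
      (∀ i < n, (X (i + 1) - X i) * rhoAdapt f g (2 / 5) n X i =
        (1 / (n : ℝ)) * ∑ j ∈ Finset.range n, (X (j + 1) - X j) * rhoAdapt f g (2 / 5) n X j) →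
      Real.sqrt (∑ i ∈ Finset.range n,
          ∫ S in (X i)..(X (i + 1)), (splineL f (X i) (X (i + 1)) S - f S) ^ 2 * g S)
        ≤ C * ((n : ℝ) ^ 2)⁻¹ := by
  obtain ⟨C, hC⟩ := hf.exists_abs_deriv_deriv_le
  obtain ⟨M, hM⟩ := isCompact_Icc.exists_bound_of_continuousOn hgc
  have hL : 0 < Xhi - Xlo := sub_pos.2 hlt
  refine ⟨4 * max C 1 * √(max M 1 * (Xhi - Xlo) ^ 5), by positivity, ?_⟩
  rintro n - X rfl rfl hX heq
  have hc : ∀ i < n, 0 ≤ curvInt f g (X i) (X (i + 1)) := fun i hi ↦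
    curvInt_nonneg (fun x hx ↦ hg0 x (Icc_subset_Icc_of_lt_succ hX hi hx)) (hX i hi)
  have herr := sum_integral_splineL_sub_sq_mul_le hX hf.continuousOn
    (fun _ ↦ hf.hasDerivAt_deriv_of_mem_Ioo) (fun _ ↦ hf.hasDerivAt_deriv_deriv_of_mem_Ioo)
    (fun x hx ↦ (hC x hx).trans (le_max_left C 1))
    hgc (fun x hx ↦ (hM x hx).trans (le_max_left M 1))
    (fun i hi ↦ sub_le_of_equidistributed hX hc (by norm_num) (by norm_num) heq hi)
  rw [Real.sqrt_le_left (by positivity)]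
  refine herr.trans (le_of_eq ?_)
  rw [mul_pow, mul_pow, Real.sq_sqrt (by positivity)]
  field_simp
  ring

/-- Convergence rate of the equidistributed static replication: there is a constant `C > 0`,
independent of `n` and of the interior points, such that for every equidistributed partition
(with `γ = 2/5`) the weighted L² spline error is at most `C n⁻²`. -/
theorem equidistribution_convergence_rate
    (Xlo Xhi : ℝ) (hXlo : 0 < Xlo) (hlt : Xlo < Xhi)
    (f g : ℝ → ℝ)
    (hf : ContDiffOn ℝ 2 f (Set.Icc Xlo Xhi))
    (hg0 : ∀ S ∈ Set.Icc Xlo Xhi, 0 ≤ g S)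
    (hgc : ContinuousOn g (Set.Icc Xlo Xhi))
    (hnz : ∃ S ∈ Set.Icc Xlo Xhi, g S * (deriv (deriv f) S) ^ 2 ≠ 0) :
    ∃ C > 0, ∀ n : ℕ, 1 ≤ n → ∀ X : ℕ → ℝ, X 0 = Xlo → X n = Xhi →
      (∀ i < n, X i < X (i + 1)) →
      (∀ i < n, (X (i + 1) - X i) * rhoAdapt f g (2 / 5) n X i =
        (1 / (n : ℝ)) * ∑ j ∈ Finset.range n, (X (j + 1) - X j) * rhoAdapt f g (2 / 5) n X j) →
      Real.sqrt (∑ i ∈ Finset.range n,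
          ∫ S in (X i)..(X (i + 1)), (splineL f (X i) (X (i + 1)) S - f S) ^ 2 * g S)
        ≤ C * ((n : ℝ) ^ 2)⁻¹ :=
  equidistribution_convergence_rate_general Xlo Xhi hlt f g hf hg0 hgc
end

section
/- For each i ∈ {0,…,n−1}, the weighted squared error of the linear interpolant on a single subinterval satisfies ∫_{X_i}^{X_{i+1}} (L_i(S) − f(S))² g(S) dS ≤ 2 h_i⁴ ∫_{X_i}^{X_{i+1}} G(S) (f″(S))² dS. -/
open MeasureTheory intervalIntegral

open Set

/-!
Write `h = b - a`. Taylor's formula with integral remainder, expanded at `S` towards both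
endpoints, gives the Peano-kernel representation
`h (L - f)(S) = (b - S) ∫_a^S (t - a) f''(t) dt + (S - a) ∫_S^b (b - t) f''(t) dt`.
With `(x + y)² ≤ 2x² + 2y²` and Cauchy–Schwarz this bounds `(L - f)(S)²` by
`2/(3h²) ((b - S)²(S - a)³ ∫_a^S f''² + (S - a)²(b - S)³ ∫_S^b f''²)`.
Multiplying by `g`, integrating over `[a, b]` and exchanging the order of integration moves all
the weight onto `f''(t)²`, and after the substitution `S = a + hξ` that weight is `3h⁶ G(t)`.
-/

theorem sq_integral_mul_le {α : Type*} [MeasurableSpace α] {μ : Measure α} {u v : α → ℝ}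
    (hu : Integrable (fun x => u x ^ 2) μ) (hv : Integrable (fun x => v x ^ 2) μ)
    (huv : Integrable (fun x => u x * v x) μ) :
    (∫ x, u x * v x ∂μ) ^ 2 ≤ (∫ x, u x ^ 2 ∂μ) * ∫ x, v x ^ 2 ∂μ := by
  have hquad : ∀ l : ℝ, 0 ≤ (∫ x, v x ^ 2 ∂μ) * (l * l) + (-2 * ∫ x, u x * v x ∂μ) * l
      + ∫ x, u x ^ 2 ∂μ := by
    intro l
    have hexp : (fun x => (l * v x - u x) ^ 2)
        = fun x => (l * l) * v x ^ 2 + (-2 * l) * (u x * v x) + u x ^ 2 := by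
      funext x; ring
    have h := integral_nonneg (μ := μ) (f := fun x => (l * v x - u x) ^ 2) fun x => sq_nonneg _
    rw [hexp, integral_add (f := fun x => l * l * v x ^ 2 + -2 * l * (u x * v x))
      ((hv.const_mul _).add (huv.const_mul _)) hu,
      integral_add (hv.const_mul _) (huv.const_mul _), MeasureTheory.integral_const_mul,
      MeasureTheory.integral_const_mul] at h
    linarith
  have hd := discrim_le_zero hquad
  rw [discrim] at hd
  nlinarith

theorem intervalIntegral.sq_integral_mul_le {a b : ℝ} (hab : a ≤ b) {u v : ℝ → ℝ}
    (hu : ContinuousOn u (Icc a b)) (hv : ContinuousOn v (Icc a b)) :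
    (∫ t in a..b, u t * v t) ^ 2 ≤ (∫ t in a..b, u t ^ 2) * ∫ t in a..b, v t ^ 2 := by
  have hint : ∀ w : ℝ → ℝ, ContinuousOn w (Icc a b) → Integrable w (volume.restrict (Ioc a b)) :=
    fun w hw => (hw.intervalIntegrable_of_Icc hab).1
  simp only [intervalIntegral.integral_of_le hab]
  exact _root_.sq_integral_mul_le (hint _ (hu.pow 2)) (hint _ (hv.pow 2)) (hint _ (hu.mul hv))

theorem integral_sub_mul_eq_taylor_remainder {f f' f'' : ℝ → ℝ} {x y : ℝ}
    (hf : ContinuousOn f (uIcc x y)) (hf' : ContinuousOn f' (uIcc x y))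
    (hfd : ∀ t ∈ Ioo (min x y) (max x y), HasDerivAt f (f' t) t)
    (hf'd : ∀ t ∈ Ioo (min x y) (max x y), HasDerivAt f' (f'' t) t)
    (hf'' : IntervalIntegrable f'' volume x y) :
    ∫ t in x..y, (y - t) * f'' t = f y - f x - (y - x) * f' x := by
  have hderiv : ∀ t ∈ Ioo (min x y) (max x y),
      HasDerivAt (fun s => (y - s) * f' s + f s) ((y - t) * f'' t) t := fun t ht =>
    ((((hasDerivAt_id' t).const_sub y).mul (hf'd t ht)).add (hfd t ht)).congr_deriv (by ring)
  rw [intervalIntegral.integral_eq_sub_of_hasDeriv_right (by fun_prop)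
    (fun t ht => (hderiv t ht).hasDerivWithinAt)
    (hf''.continuousOn_mul (continuousOn_const.sub continuousOn_id))]
  ring

section PeanoKernel

variable {f f' F : ℝ → ℝ} {a b S : ℝ}

theorem splineL_sub_eq_integral (hab : a < b) (hf : ContinuousOn f (Icc a b))
    (hf' : ContinuousOn f' (Icc a b)) (hfd : ∀ t ∈ Ioo a b, HasDerivAt f (f' t) t)
    (hf'd : ∀ t ∈ Ioo a b, HasDerivAt f' (F t) t) (hF : ContinuousOn F (Icc a b))
    (hS : S ∈ Icc a b) :
    splineL f a b S - f S = ((b - S) * (∫ t in a..S, (t - a) * F t)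
      + (S - a) * ∫ t in S..b, (b - t) * F t) / (b - a) := by
  have taylor : ∀ y ∈ Icc a b, ∫ t in S..y, (y - t) * F t = f y - f S - (y - S) * f' S := by
    intro y hy
    have hsub : uIcc S y ⊆ Icc a b := uIcc_subset_Icc hS hy
    have hIoo : Ioo (min S y) (max S y) ⊆ Ioo a b :=
      Ioo_subset_Ioo (le_min hS.1 hy.1) (max_le hS.2 hy.2)
    exact integral_sub_mul_eq_taylor_remainder (hf.mono hsub) (hf'.mono hsub)
      (fun t ht => hfd t (hIoo ht)) (fun t ht => hf'd t (hIoo ht))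
      ((hF.mono hsub).intervalIntegrable)
  have hleft : ∫ t in a..S, (t - a) * F t = f a - f S - (a - S) * f' S := by
    rw [← taylor a (left_mem_Icc.2 hab.le), intervalIntegral.integral_symm,
      ← intervalIntegral.integral_neg]
    congr 1; ext t; ring
  rw [hleft, taylor b (right_mem_Icc.2 hab.le), splineL]
  field_simp [sub_ne_zero.2 hab.ne']
  ring

theorem sq_splineL_sub_le (hab : a < b) (hf : ContinuousOn f (Icc a b))
    (hf' : ContinuousOn f' (Icc a b)) (hfd : ∀ t ∈ Ioo a b, HasDerivAt f (f' t) t)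
    (hf'd : ∀ t ∈ Ioo a b, HasDerivAt f' (F t) t) (hF : ContinuousOn F (Icc a b))
    (hS : S ∈ Icc a b) :
    (splineL f a b S - f S) ^ 2 ≤ 2 / (3 * (b - a) ^ 2) *
      ((b - S) ^ 2 * (S - a) ^ 3 * (∫ t in a..S, F t ^ 2)
        + (S - a) ^ 2 * (b - S) ^ 3 * ∫ t in S..b, F t ^ 2) := by
  have hFl : ContinuousOn F (Icc a S) := hF.mono (Icc_subset_Icc_right hS.2)
  have hFr : ContinuousOn F (Icc S b) := hF.mono (Icc_subset_Icc_left hS.1)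
  have hleft : (∫ t in a..S, (t - a) * F t) ^ 2 ≤ (S - a) ^ 3 / 3 * ∫ t in a..S, F t ^ 2 := by
    have hsq : ∫ t in a..S, (t - a) ^ 2 = (S - a) ^ 3 / 3 := by
      norm_num [intervalIntegral.integral_comp_sub_right fun x => x ^ 2]
    simpa only [hsq] using
      intervalIntegral.sq_integral_mul_le (u := fun t => t - a) hS.1 (by fun_prop) hFl
  have hright : (∫ t in S..b, (b - t) * F t) ^ 2 ≤ (b - S) ^ 3 / 3 * ∫ t in S..b, F t ^ 2 := by
    have hsq : ∫ t in S..b, (b - t) ^ 2 = (b - S) ^ 3 / 3 := by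
      norm_num [intervalIntegral.integral_comp_sub_left fun x => x ^ 2]
    simpa only [hsq] using
      intervalIntegral.sq_integral_mul_le (u := fun t => b - t) hS.2 (by fun_prop) hFr
  have hQl : 0 ≤ ∫ t in a..S, F t ^ 2 :=
    intervalIntegral.integral_nonneg hS.1 fun t _ => sq_nonneg _
  have hQr : 0 ≤ ∫ t in S..b, F t ^ 2 :=
    intervalIntegral.integral_nonneg hS.2 fun t _ => sq_nonneg _
  rw [splineL_sub_eq_integral hab hf hf' hfd hf'd hF hS]
  set p := ∫ t in a..S, (t - a) * F t
  set q := ∫ t in S..b, (b - t) * F t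
  calc (((b - S) * p + (S - a) * q) / (b - a)) ^ 2
      = ((b - S) * p + (S - a) * q) ^ 2 / (b - a) ^ 2 := div_pow _ _ _
    _ ≤ (2 * (b - S) ^ 2 * p ^ 2 + 2 * (S - a) ^ 2 * q ^ 2) / (b - a) ^ 2 := by
      gcongr
      nlinarith [sq_nonneg ((b - S) * p - (S - a) * q)]
    _ ≤ (2 * (b - S) ^ 2 * ((S - a) ^ 3 / 3 * ∫ t in a..S, F t ^ 2)
        + 2 * (S - a) ^ 2 * ((b - S) ^ 3 / 3 * ∫ t in S..b, F t ^ 2)) / (b - a) ^ 2 := by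
      gcongr
    _ = _ := by field_simp

end PeanoKernel

theorem integral_mul_integral_swap {φ w : ℝ → ℝ} (hφ : Continuous φ) (hw : Continuous w)
    (a b : ℝ) :
    ∫ S in a..b, w S * ∫ t in a..S, φ t = ∫ t in a..b, φ t * ∫ S in t..b, w S := by
  have hparts := intervalIntegral.integral_mul_deriv_eq_deriv_mul
    (u := fun S => ∫ t in a..S, φ t) (v := fun t => ∫ S in t..b, w S) (v' := fun S => -w S)
    (fun x _ => (hφ.integral_hasStrictDerivAt a x).hasDerivAt)
    (fun x _ => intervalIntegral.integral_hasDerivAt_left (hw.intervalIntegrable x b)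
      (hw.stronglyMeasurableAtFilter _ _) hw.continuousAt)
    (hφ.intervalIntegrable a b) (hw.neg.intervalIntegrable a b)
  simp only [intervalIntegral.integral_same, zero_mul, mul_zero, sub_zero, zero_sub, mul_neg,
    intervalIntegral.integral_neg, neg_inj] at hparts
  simpa only [mul_comm] using hparts

theorem weightG_eq (g : ℝ → ℝ) {a b : ℝ} (hab : a ≠ b) (t : ℝ) :
    weightG g a b t = ((∫ S in a..t, g S * ((S - a) ^ 2 * (b - S) ^ 3))
      + ∫ S in t..b, g S * ((b - S) ^ 2 * (S - a) ^ 3)) / (3 * (b - a) ^ 6) := by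
  have hh : b - a ≠ 0 := sub_ne_zero.2 hab.symm
  have hcov : ∀ (k : ℝ → ℝ) (x y : ℝ), ∫ ξ in x..y, k (a + (b - a) * ξ)
      = (∫ S in a + (b - a) * x..a + (b - a) * y, k S) / (b - a) := fun k x y => by
    rw [intervalIntegral.integral_comp_add_mul k hh, smul_eq_mul, inv_mul_eq_div]
  set k₁ : ℝ → ℝ := fun S => g S * ((S - a) ^ 2 * (b - S) ^ 3) / (3 * (b - a) ^ 5)
  set k₂ : ℝ → ℝ := fun S => g S * ((b - S) ^ 2 * (S - a) ^ 3) / (3 * (b - a) ^ 5)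
  have hweight : weightG g a b t = (∫ ξ in 0..(t - a) / (b - a), k₁ (a + (b - a) * ξ))
      + ∫ ξ in (t - a) / (b - a)..1, k₂ (a + (b - a) * ξ) := by
    rw [weightG]
    congr 1 <;> refine intervalIntegral.integral_congr fun ξ _ => ?_ <;>
      simp only [k₁, k₂] <;> field_simp <;> ring
  have ht : a + (b - a) * ((t - a) / (b - a)) = t := by field_simp; ring
  rw [hweight, hcov k₁, hcov k₂, ht, mul_zero, add_zero, mul_one, add_sub_cancel,
    intervalIntegral.integral_div, intervalIntegral.integral_div]
  field_simp

theorem continuous_integral_upper {φ : ℝ → ℝ} (hφ : Continuous φ) (a : ℝ) :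
    Continuous fun S => ∫ t in a..S, φ t :=
  intervalIntegral.continuous_primitive (fun _ _ => hφ.intervalIntegrable _ _) a

theorem continuous_integral_lower {φ : ℝ → ℝ} (hφ : Continuous φ) (b : ℝ) :
    Continuous fun S => ∫ t in S..b, φ t :=
  (continuous_integral_upper hφ b).neg.congr fun S => (intervalIntegral.integral_symm b S).symm

theorem integral_sq_splineL_sub_mul_le {f f' F g : ℝ → ℝ} {a b : ℝ} (hab : a < b)
    (hf : ContinuousOn f (Icc a b)) (hf' : ContinuousOn f' (Icc a b))
    (hfd : ∀ t ∈ Ioo a b, HasDerivAt f (f' t) t) (hf'd : ∀ t ∈ Ioo a b, HasDerivAt f' (F t) t)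
    (hF : Continuous F) (hg : Continuous g) (hg0 : ∀ S ∈ Icc a b, 0 ≤ g S) :
    ∫ S in a..b, (splineL f a b S - f S) ^ 2 * g S
      ≤ 2 * (b - a) ^ 4 * ∫ S in a..b, weightG g a b S * F S ^ 2 := by
  set w₁ : ℝ → ℝ := fun S => g S * ((S - a) ^ 2 * (b - S) ^ 3)
  set w₂ : ℝ → ℝ := fun S => g S * ((b - S) ^ 2 * (S - a) ^ 3)
  have hw₁ : Continuous w₁ := by fun_prop
  have hw₂ : Continuous w₂ := by fun_prop
  have hF2 : Continuous fun t => F t ^ 2 := by fun_prop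
  have hQ₁ := continuous_integral_upper hF2 a
  have hQ₂ := continuous_integral_lower hF2 b
  have hH₁ := continuous_integral_upper hw₁ a
  have hH₂ := continuous_integral_lower hw₂ b
  have hpointwise : ∀ S ∈ Icc a b, (splineL f a b S - f S) ^ 2 * g S
      ≤ 2 / (3 * (b - a) ^ 2) * (w₂ S * (∫ t in a..S, F t ^ 2) + w₁ S * ∫ t in S..b, F t ^ 2) := by
    intro S hS
    calc (splineL f a b S - f S) ^ 2 * g S
        ≤ 2 / (3 * (b - a) ^ 2) * ((b - S) ^ 2 * (S - a) ^ 3 * (∫ t in a..S, F t ^ 2)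
          + (S - a) ^ 2 * (b - S) ^ 3 * ∫ t in S..b, F t ^ 2) * g S :=
        mul_le_mul_of_nonneg_right
          (sq_splineL_sub_le hab hf hf' hfd hf'd hF.continuousOn hS) (hg0 S hS)
      _ = _ := by ring
  have hLint : IntervalIntegrable (fun S => (splineL f a b S - f S) ^ 2 * g S) volume a b := by
    refine ContinuousOn.intervalIntegrable ?_
    rw [uIcc_of_le hab.le]
    unfold splineL
    fun_prop
  calc ∫ S in a..b, (splineL f a b S - f S) ^ 2 * g S
      ≤ ∫ S in a..b, 2 / (3 * (b - a) ^ 2)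
          * (w₂ S * (∫ t in a..S, F t ^ 2) + w₁ S * ∫ t in S..b, F t ^ 2) :=
        intervalIntegral.integral_mono_on hab.le hLint
          (Continuous.intervalIntegrable (by fun_prop) a b) hpointwise
    _ = 2 / (3 * (b - a) ^ 2) * ((∫ S in a..b, w₂ S * ∫ t in a..S, F t ^ 2)
          + ∫ S in a..b, w₁ S * ∫ t in S..b, F t ^ 2) := by
        rw [intervalIntegral.integral_const_mul, intervalIntegral.integral_add
          (Continuous.intervalIntegrable (by fun_prop) a b)
          (Continuous.intervalIntegrable (by fun_prop) a b)]
    _ = 2 / (3 * (b - a) ^ 2) * ((∫ t in a..b, F t ^ 2 * ∫ S in t..b, w₂ S)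
          + ∫ t in a..b, F t ^ 2 * ∫ S in a..t, w₁ S) := by
        rw [integral_mul_integral_swap hF2 hw₂, integral_mul_integral_swap hw₁ hF2]
    _ = 2 * (b - a) ^ 4 * ∫ S in a..b, weightG g a b S * F S ^ 2 := by
        have hweight : ∀ S, weightG g a b S * F S ^ 2 = (F S ^ 2 * (∫ S' in S..b, w₂ S')
            + F S ^ 2 * ∫ S' in a..S, w₁ S') / (3 * (b - a) ^ 6) := by
          intro S
          rw [weightG_eq g hab.ne]
          ring
        simp only [hweight]
        rw [intervalIntegral.integral_div, intervalIntegral.integral_add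
          (Continuous.intervalIntegrable (by fun_prop) a b)
          (Continuous.intervalIntegrable (by fun_prop) a b)]
        field_simp [sub_ne_zero.2 hab.ne']

theorem ContinuousOn.exists_continuous_eqOn_Icc {α β : Type*} [LinearOrder α]
    [TopologicalSpace α] [OrderTopology α] [TopologicalSpace β] {φ : α → β} {a b : α}
    (hab : a ≤ b) (hφ : ContinuousOn φ (Icc a b)) :
    ∃ ψ : α → β, Continuous ψ ∧ EqOn ψ φ (Icc a b) :=
  ⟨IccExtend hab ((Icc a b).domRestrict φ), hφ.domRestrict.Icc_extend',
    fun _ hx => IccExtend_of_mem hab _ hx⟩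

theorem weightG_congr {g g' : ℝ → ℝ} {a b S : ℝ} (hab : a < b) (h : EqOn g g' (Icc a b))
    (hS : S ∈ Icc a b) : weightG g a b S = weightG g' a b S := by
  have ha := left_mem_Icc.2 hab.le
  have hb := right_mem_Icc.2 hab.le
  rw [weightG_eq g hab.ne, weightG_eq g' hab.ne]
  congr 2 <;> refine intervalIntegral.integral_congr fun x hx => ?_
  · rw [h (uIcc_subset_Icc ha hS hx)]
  · rw [h (uIcc_subset_Icc hS hb hx)]

theorem DifferentiableOn.hasDerivAt_derivWithin_Icc {φ : ℝ → ℝ} {a b x : ℝ}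
    (hφ : DifferentiableOn ℝ φ (Icc a b)) (hx : x ∈ Ioo a b) :
    HasDerivAt φ (derivWithin φ (Icc a b) x) x :=
  (hφ x (Ioo_subset_Icc_self hx)).hasDerivWithinAt.hasDerivAt (Icc_mem_nhds hx.1 hx.2)

theorem integral_sq_splineL_sub_mul_le_of_contDiffOn {f g : ℝ → ℝ} {a b : ℝ} (hab : a < b)
    (hf : ContDiffOn ℝ 2 f (Icc a b)) (hg : ContinuousOn g (Icc a b))
    (hg0 : ∀ S ∈ Icc a b, 0 ≤ g S) :
    ∫ S in a..b, (splineL f a b S - f S) ^ 2 * g S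
      ≤ 2 * (b - a) ^ 4 * ∫ S in a..b, weightG g a b S * deriv (deriv f) S ^ 2 := by
  have hu := uniqueDiffOn_Icc hab
  have hf1 := hf.derivWithin hu (m := 1) le_rfl
  obtain ⟨F, hF, hFeq⟩ :=
    (hf1.continuousOn_derivWithin hu le_rfl).exists_continuous_eqOn_Icc hab.le
  obtain ⟨g', hg', hgg'⟩ := hg.exists_continuous_eqOn_Icc hab.le
  have hfd : ∀ x ∈ Ioo a b, HasDerivAt f (derivWithin f (Icc a b) x) x :=
    fun x hx => (hf.differentiableOn two_ne_zero).hasDerivAt_derivWithin_Icc hx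
  have hf'd : ∀ x ∈ Ioo a b, HasDerivAt (derivWithin f (Icc a b)) (F x) x := fun x hx =>
    hFeq (Ioo_subset_Icc_self hx) ▸ (hf1.differentiableOn one_ne_zero).hasDerivAt_derivWithin_Icc hx
  have hF'' : EqOn (deriv (deriv f)) F (Ioo a b) := fun x hx => by
    have hderiv_eq : deriv f =ᶠ[nhds x] derivWithin f (Icc a b) :=
      Filter.eventually_of_mem (Ioo_mem_nhds hx.1 hx.2) fun y hy => (hfd y hy).deriv
    rw [hderiv_eq.deriv_eq, (hf'd x hx).deriv]
  calc ∫ S in a..b, (splineL f a b S - f S) ^ 2 * g S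
      = ∫ S in a..b, (splineL f a b S - f S) ^ 2 * g' S :=
        intervalIntegral.integral_congr_Ioo_of_le hab.le fun S hS => by
          rw [hgg' (Ioo_subset_Icc_self hS)]
    _ ≤ 2 * (b - a) ^ 4 * ∫ S in a..b, weightG g' a b S * F S ^ 2 :=
        integral_sq_splineL_sub_mul_le hab hf.continuousOn hf1.continuousOn hfd hf'd hF hg'
          fun S hS => hgg' hS ▸ hg0 S hS
    _ = _ := by
        congr 1
        refine intervalIntegral.integral_congr_Ioo_of_le hab.le fun S hS => ?_
        rw [weightG_congr hab hgg' (Ioo_subset_Icc_self hS), hF'' hS]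

theorem single_interval_error_bound_general
    (n : ℕ) (X : ℕ → ℝ)
    (hXmono : ∀ i < n, X i < X (i + 1))
    (f g : ℝ → ℝ)
    (hf2 : ∀ i < n, ContDiffOn ℝ 2 f (Set.Icc (X i) (X (i + 1))))
    (hg0 : ∀ S ∈ Set.Icc (X 0) (X n), 0 ≤ g S)
    (hgc : ContinuousOn g (Set.Icc (X 0) (X n)))
    (i : ℕ) (hi : i < n) :
    ∫ S in (X i)..(X (i + 1)), (splineL f (X i) (X (i + 1)) S - f S) ^ 2 * g S
      ≤ 2 * (X (i + 1) - X i) ^ 4 *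
        ∫ S in (X i)..(X (i + 1)),
          weightG g (X i) (X (i + 1)) S * (deriv (deriv f) S) ^ 2 := by
  have hmono : MonotoneOn X (Iic n) := (strictMonoOn_Iic_of_lt_succ hXmono).monotoneOn
  have hsub : Icc (X i) (X (i + 1)) ⊆ Icc (X 0) (X n) :=
    Icc_subset_Icc (hmono n.zero_le hi.le i.zero_le) (hmono hi (le_refl n) hi)
  exact integral_sq_splineL_sub_mul_le_of_contDiffOn (hXmono i hi) (hf2 i hi) (hgc.mono hsub)
    fun S hS => hg0 S (hsub hS)

/-- Single-subinterval weighted squared error bound: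
`∫_{X_i}^{X_{i+1}} (L_i(S) − f(S))² g(S) dS ≤ 2 h_i⁴ ∫_{X_i}^{X_{i+1}} G(S)(f″(S))² dS`. -/
theorem single_interval_error_bound
    (n : ℕ) (hn : 1 ≤ n) (X : ℕ → ℝ) (hX0 : 0 < X 0)
    (hXmono : ∀ i < n, X i < X (i + 1))
    (f g : ℝ → ℝ)
    (hf : ContinuousOn f (Set.Icc (X 0) (X n)))
    (hf2 : ∀ i < n, ContDiffOn ℝ 2 f (Set.Icc (X i) (X (i + 1))))
    (hg0 : ∀ S ∈ Set.Icc (X 0) (X n), 0 ≤ g S)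
    (hgc : ContinuousOn g (Set.Icc (X 0) (X n)))
    (i : ℕ) (hi : i < n) :
    ∫ S in (X i)..(X (i + 1)), (splineL f (X i) (X (i + 1)) S - f S) ^ 2 * g S
      ≤ 2 * (X (i + 1) - X i) ^ 4 *
        ∫ S in (X i)..(X (i + 1)),
          weightG g (X i) (X (i + 1)) S * (deriv (deriv f) S) ^ 2 :=
  single_interval_error_bound_general n X hXmono f g hf2 hg0 hgc i hi
end

section
/- For every k ∈ {1,…,n−1} and every real S ≥ 0 with S ∉ {X_0, X_1,…,X_n}, the piecewise linear spline admits the static-replication decomposition: Σ_{i=0}^{n−1} L_i(S)·1_{X_i<S<X_{i+1}} = f(X_k) − L_0(X_0)·1_{S<X_0} − L_{n−1}(X_n)·1_{S>X_n} + b_0 (X_0 − S)·1_{S<X_0} + Σ_{i=1}^{k−1} (b_i − b_{i−1})(X_i − S)·1_{S<X_i} − b_{k−1}(X_k − S)·1_{S<X_k} + b_k (S − X_k)·1_{S>X_k} + Σ_{i=k+1}^{n−1} (b_i − b_{i−1})(S − X_i)·1_{S>X_i} − b_{n−1}(S − X_n)·1_{S>X_n}. -/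
/-- Abel-summation / telescoping identity for the segment of digital+slope-difference terms. -/
lemma seg_sum (b g : ℕ → ℝ) (a : ℕ) :
    ∀ c, a + 1 ≤ c →
    b a * g a + (∑ i ∈ Finset.Ico (a + 1) c, (b i - b (i - 1)) * g i) - b (c - 1) * g c
      = ∑ i ∈ Finset.Ico a c, b i * (g i - g (i + 1)) := by
  intro c hc
  induction c, hc using Nat.le_induction with
  | base =>
      rw [Finset.Ico_self, Finset.sum_empty,
        Finset.sum_Ico_succ_top (le_refl a), Finset.Ico_self, Finset.sum_empty]
      simp
      ring
  | succ c hc ih =>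
      rw [Finset.sum_Ico_succ_top (by omega : a + 1 ≤ c),
        Finset.sum_Ico_succ_top (by omega : a ≤ c)]
      have h1 : c + 1 - 1 = c := by omega
      rw [h1]
      linear_combination ih

/-- Static-replication decomposition of the piecewise linear spline: for `S ≥ 0` not equal to
any node, `Σ_i L_i(S) 1_{X_i<S<X_{i+1}}` equals a cash amount `f(X_k)`, digital corrections,
a portfolio of puts with strikes `X_0,…,X_k` and a portfolio of calls with strikes
`X_{k+1},…,X_n`. -/
theorem static_replication_decomposition
    (n : ℕ) (hn : 2 ≤ n) (X : ℕ → ℝ) (hX0 : 0 < X 0)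
    (hXmono : ∀ i < n, X i < X (i + 1))
    (f : ℝ → ℝ)
    (b : ℕ → ℝ) (hb : ∀ i, b i = (f (X (i + 1)) - f (X i)) / (X (i + 1) - X i))
    (L : ℕ → ℝ → ℝ)
    (hL : ∀ i, L i = fun S =>
      ((X (i + 1) - S) / (X (i + 1) - X i)) * f (X i)
        + ((S - X i) / (X (i + 1) - X i)) * f (X (i + 1)))
    (k : ℕ) (hk1 : 1 ≤ k) (hk2 : k ≤ n - 1)
    (S : ℝ) (hS : 0 ≤ S) (hSnode : ∀ i ≤ n, S ≠ X i) :
    ∑ i ∈ Finset.range n, (if X i < S ∧ S < X (i + 1) then L i S else 0)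
      = f (X k)
        - (if S < X 0 then L 0 (X 0) else 0)
        - (if X n < S then L (n - 1) (X n) else 0)
        + (if S < X 0 then b 0 * (X 0 - S) else 0)
        + (∑ i ∈ Finset.Ico 1 k, if S < X i then (b i - b (i - 1)) * (X i - S) else 0)
        - (if S < X k then b (k - 1) * (X k - S) else 0)
        + (if X k < S then b k * (S - X k) else 0)
        + (∑ i ∈ Finset.Ico (k + 1) n, if X i < S then (b i - b (i - 1)) * (S - X i) else 0)
        - (if X n < S then b (n - 1) * (S - X n) else 0) := by
  have hkn : k < n := by omega
  -- monotonicity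
  have hle : ∀ i j, i ≤ j → j ≤ n → X i ≤ X j := by
    intro i j hij hjn
    induction j, hij using Nat.le_induction with
    | base => exact le_refl _
    | succ j hij ih =>
        exact le_trans (ih (by omega)) (le_of_lt (hXmono j (by omega)))
  have hlt : ∀ i j, i < j → j ≤ n → X i < X j := by
    intro i j hij hjn
    exact lt_of_lt_of_le (hXmono i (by omega)) (hle (i + 1) j hij hjn)
  have hne : ∀ i < n, X (i + 1) - X i ≠ 0 := fun i hi =>
    ne_of_gt (sub_pos.2 (hXmono i hi))
  have hbX : ∀ i < n, b i * (X (i + 1) - X i) = f (X (i + 1)) - f (X i) := by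
    intro i hi
    rw [hb, div_mul_cancel₀ _ (hne i hi)]
  have hLeq : ∀ i < n, ∀ T : ℝ, L i T = f (X i) + b i * (T - X i) := by
    intro i hi T
    have h := hne i hi
    simp only [hL, hb]
    field_simp
    ring
  have hLeq2 : ∀ i < n, ∀ T : ℝ, L i T = f (X (i + 1)) + b i * (T - X (i + 1)) := by
    intro i hi T
    have h := hne i hi
    simp only [hL, hb]
    field_simp
    ring
  -- telescoping sum of b i * h i
  have tel : ∀ a c, a ≤ c → c ≤ n →
      ∑ i ∈ Finset.Ico a c, b i * (X (i + 1) - X i) = f (X c) - f (X a) := by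
    intro a c hac hcn
    induction c, hac using Nat.le_induction with
    | base => simp
    | succ c hac ih =>
        rw [Finset.sum_Ico_succ_top hac, ih (by omega), hbX c (by omega)]
        ring
  by_cases h0 : S < X 0
  · -- S below all nodes
    have hLHS : (∑ i ∈ Finset.range n, if X i < S ∧ S < X (i + 1) then L i S else 0) = 0 := by
      refine Finset.sum_eq_zero fun i hi => if_neg ?_
      rintro ⟨h1, -⟩
      have : X 0 ≤ X i := hle 0 i (Nat.zero_le i) (by
        simp only [Finset.mem_range] at hi; omega)
      linarith
    have hnlt : ¬ X n < S := by
      have : X 0 ≤ X n := hle 0 n (Nat.zero_le n) le_rfl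
      linarith
    have hput : (∑ i ∈ Finset.Ico 1 k, if S < X i then (b i - b (i - 1)) * (X i - S) else 0)
        = ∑ i ∈ Finset.Ico 1 k, (b i - b (i - 1)) * (X i - S) := by
      refine Finset.sum_congr rfl fun i hi => if_pos ?_
      simp only [Finset.mem_Ico] at hi
      have : X 0 ≤ X i := hle 0 i (Nat.zero_le i) (by omega)
      linarith
    have hSk : S < X k := by
      have : X 0 ≤ X k := hle 0 k (Nat.zero_le k) (by omega)
      linarith
    have hcall : (∑ i ∈ Finset.Ico (k + 1) n,
        if X i < S then (b i - b (i - 1)) * (S - X i) else 0) = 0 := by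
      refine Finset.sum_eq_zero fun i hi => if_neg ?_
      simp only [Finset.mem_Ico] at hi
      have : X 0 ≤ X i := hle 0 i (Nat.zero_le i) (by omega)
      linarith
    rw [hLHS, hput, hcall, if_pos h0, if_neg hnlt, if_pos h0, if_pos hSk,
      if_neg (by linarith : ¬ X k < S), if_neg hnlt]
    have hseg := seg_sum b (fun i => X i - S) 0 k (by omega)
    beta_reduce at hseg
    have hsum : ∑ i ∈ Finset.Ico 0 k, b i * ((X i - S) - (X (i + 1) - S))
        = -(f (X k) - f (X 0)) := by
      rw [← neg_eq_iff_eq_neg, ← Finset.sum_neg_distrib]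
      rw [show (∑ i ∈ Finset.Ico 0 k, -(b i * ((X i - S) - (X (i + 1) - S))))
          = ∑ i ∈ Finset.Ico 0 k, b i * (X (i + 1) - X i) from
        Finset.sum_congr rfl fun i _ => by ring]
      exact tel 0 k (Nat.zero_le k) (by omega)
    rw [hsum] at hseg
    have hL0 : L 0 (X 0) = f (X 0) := by
      rw [hLeq 0 (by omega) (X 0)]; ring
    rw [hL0]
    linarith [hseg]
  · by_cases hnS : X n < S
    · -- S above all nodes
      have hLHS : (∑ i ∈ Finset.range n, if X i < S ∧ S < X (i + 1) then L i S else 0) = 0 := by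
        refine Finset.sum_eq_zero fun i hi => if_neg ?_
        rintro ⟨-, h2⟩
        have : X (i + 1) ≤ X n := hle (i + 1) n (by
          simp only [Finset.mem_range] at hi; omega) le_rfl
        linarith
      have hput : (∑ i ∈ Finset.Ico 1 k, if S < X i then (b i - b (i - 1)) * (X i - S) else 0)
          = 0 := by
        refine Finset.sum_eq_zero fun i hi => if_neg ?_
        simp only [Finset.mem_Ico] at hi
        have : X i ≤ X n := hle i n (by omega) le_rfl
        linarith
      have hkS : X k < S := by
        have : X k ≤ X n := hle k n (by omega) le_rfl
        linarith
      have hcall : (∑ i ∈ Finset.Ico (k + 1) n,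
          if X i < S then (b i - b (i - 1)) * (S - X i) else 0)
          = ∑ i ∈ Finset.Ico (k + 1) n, (b i - b (i - 1)) * (S - X i) := by
        refine Finset.sum_congr rfl fun i hi => if_pos ?_
        simp only [Finset.mem_Ico] at hi
        have : X i ≤ X n := hle i n (by omega) le_rfl
        linarith
      rw [hLHS, hput, hcall, if_neg h0, if_pos hnS, if_neg h0,
        if_neg (by linarith : ¬ S < X k), if_pos hkS, if_pos hnS]
      have hseg := seg_sum b (fun i => S - X i) k n (by omega)
      beta_reduce at hseg
      have hsum : ∑ i ∈ Finset.Ico k n, b i * ((S - X i) - (S - X (i + 1)))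
          = f (X n) - f (X k) := by
        rw [show (∑ i ∈ Finset.Ico k n, b i * ((S - X i) - (S - X (i + 1))))
            = ∑ i ∈ Finset.Ico k n, b i * (X (i + 1) - X i) from
          Finset.sum_congr rfl fun i _ => by ring]
        exact tel k n (by omega) le_rfl
      rw [hsum] at hseg
      have hLn : L (n - 1) (X n) = f (X n) := by
        rw [hLeq2 (n - 1) (by omega) (X n), show n - 1 + 1 = n by omega]
        ring
      rw [hLn]
      linarith [hseg]
    · -- S is in some interval (X j, X (j+1))
      have hX0S : X 0 < S :=
        lt_of_le_of_ne (not_lt.1 h0) fun e => hSnode 0 (by omega) e.symm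
      have hSXn : S < X n :=
        lt_of_le_of_ne (not_lt.1 hnS) (hSnode n le_rfl)
      have findj : ∀ m, m ≤ n → S < X m → ∃ j, j < m ∧ X j < S ∧ S < X (j + 1) := by
        intro m
        induction m with
        | zero => intro _ h; exact absurd h (by linarith)
        | succ m ih =>
            intro hm h
            by_cases hm' : S < X m
            · obtain ⟨j, hj1, hj2, hj3⟩ := ih (by omega) hm'
              exact ⟨j, by omega, hj2, hj3⟩
            · exact ⟨m, by omega,
                lt_of_le_of_ne (not_lt.1 hm') fun e => hSnode m (by omega) e.symm, h⟩
      obtain ⟨j, hjn, hjS, hSj⟩ := findj n le_rfl hSXn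
      -- LHS equals L j S
      have hLHS : (∑ i ∈ Finset.range n, if X i < S ∧ S < X (i + 1) then L i S else 0)
          = L j S := by
        rw [Finset.sum_eq_single_of_mem j (Finset.mem_range.2 hjn)]
        · exact if_pos ⟨hjS, hSj⟩
        · intro i hi hij
          refine if_neg ?_
          rintro ⟨h1, h2⟩
          simp only [Finset.mem_range] at hi
          rcases lt_or_gt_of_ne hij with hlt' | hgt'
          · have : X (i + 1) ≤ X j := hle (i + 1) j hlt' (by omega)
            linarith
          · have : X (j + 1) ≤ X i := hle (j + 1) i hgt' (by omega)
            linarith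
      rw [hLHS, if_neg h0, if_neg hnS, if_neg h0, if_neg hnS]
      by_cases hjk : j < k
      · -- S is to the left of X k
        have hSk : S < X k := lt_of_lt_of_le hSj (hle (j + 1) k hjk (by omega))
        have hput : (∑ i ∈ Finset.Ico 1 k, if S < X i then (b i - b (i - 1)) * (X i - S) else 0)
            = ∑ i ∈ Finset.Ico (j + 1) k, (b i - b (i - 1)) * (X i - S) := by
          rw [← Finset.sum_Ico_consecutive _ (by omega : 1 ≤ j + 1) (by omega : j + 1 ≤ k)]
          have h1 : (∑ i ∈ Finset.Ico 1 (j + 1),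
              if S < X i then (b i - b (i - 1)) * (X i - S) else 0) = 0 := by
            refine Finset.sum_eq_zero fun i hi => if_neg ?_
            simp only [Finset.mem_Ico] at hi
            have : X i ≤ X j := hle i j (by omega) (by omega)
            linarith
          have h2 : (∑ i ∈ Finset.Ico (j + 1) k,
              if S < X i then (b i - b (i - 1)) * (X i - S) else 0)
              = ∑ i ∈ Finset.Ico (j + 1) k, (b i - b (i - 1)) * (X i - S) := by
            refine Finset.sum_congr rfl fun i hi => if_pos ?_
            simp only [Finset.mem_Ico] at hi
            have : X (j + 1) ≤ X i := hle (j + 1) i (by omega) (by omega)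
            linarith
          rw [h1, h2, zero_add]
        have hcall : (∑ i ∈ Finset.Ico (k + 1) n,
            if X i < S then (b i - b (i - 1)) * (S - X i) else 0) = 0 := by
          refine Finset.sum_eq_zero fun i hi => if_neg ?_
          simp only [Finset.mem_Ico] at hi
          have : X (j + 1) ≤ X i := hle (j + 1) i (by omega) (by omega)
          linarith
        rw [hput, hcall, if_pos hSk, if_neg (by linarith : ¬ X k < S)]
        have hseg := seg_sum b (fun i => X i - S) j k (by omega)
        beta_reduce at hseg
        have hsum : ∑ i ∈ Finset.Ico j k, b i * ((X i - S) - (X (i + 1) - S))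
            = -(f (X k) - f (X j)) := by
          rw [show (∑ i ∈ Finset.Ico j k, b i * ((X i - S) - (X (i + 1) - S)))
              = ∑ i ∈ Finset.Ico j k, -(b i * (X (i + 1) - X i)) from
            Finset.sum_congr rfl fun i _ => by ring, Finset.sum_neg_distrib,
            tel j k (by omega) (by omega)]
        rw [hsum] at hseg
        rw [hLeq j hjn S]
        linarith [hseg]
      · -- S is to the right of X k
        have hkj : k ≤ j := by omega
        have hkS : X k < S := lt_of_le_of_lt (hle k j hkj (by omega)) hjS
        have hput : (∑ i ∈ Finset.Ico 1 k,
            if S < X i then (b i - b (i - 1)) * (X i - S) else 0) = 0 := by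
          refine Finset.sum_eq_zero fun i hi => if_neg ?_
          simp only [Finset.mem_Ico] at hi
          have : X i ≤ X j := hle i j (by omega) (by omega)
          linarith
        have hcall : (∑ i ∈ Finset.Ico (k + 1) n,
            if X i < S then (b i - b (i - 1)) * (S - X i) else 0)
            = ∑ i ∈ Finset.Ico (k + 1) (j + 1), (b i - b (i - 1)) * (S - X i) := by
          rw [← Finset.sum_Ico_consecutive _ (by omega : k + 1 ≤ j + 1) (by omega : j + 1 ≤ n)]
          have h1 : (∑ i ∈ Finset.Ico (k + 1) (j + 1),
              if X i < S then (b i - b (i - 1)) * (S - X i) else 0)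
              = ∑ i ∈ Finset.Ico (k + 1) (j + 1), (b i - b (i - 1)) * (S - X i) := by
            refine Finset.sum_congr rfl fun i hi => if_pos ?_
            simp only [Finset.mem_Ico] at hi
            have : X i ≤ X j := hle i j (by omega) (by omega)
            linarith
          have h2 : (∑ i ∈ Finset.Ico (j + 1) n,
              if X i < S then (b i - b (i - 1)) * (S - X i) else 0) = 0 := by
            refine Finset.sum_eq_zero fun i hi => if_neg ?_
            simp only [Finset.mem_Ico] at hi
            have : X (j + 1) ≤ X i := hle (j + 1) i (by omega) (by omega)
            linarith
          rw [h1, h2, add_zero]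
        rw [hput, hcall, if_neg (by linarith : ¬ S < X k), if_pos hkS]
        have hseg := seg_sum b (fun i => S - X i) k (j + 1) (by omega)
        beta_reduce at hseg
        simp only [Nat.add_sub_cancel] at hseg
        have hsum : ∑ i ∈ Finset.Ico k (j + 1), b i * ((S - X i) - (S - X (i + 1)))
            = f (X (j + 1)) - f (X k) := by
          rw [show (∑ i ∈ Finset.Ico k (j + 1), b i * ((S - X i) - (S - X (i + 1))))
              = ∑ i ∈ Finset.Ico k (j + 1), b i * (X (i + 1) - X i) from
            Finset.sum_congr rfl fun i _ => by ring]
          exact tel k (j + 1) (by omega) (by omega)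
        rw [hsum] at hseg
        rw [hLeq2 j hjn S]
        linarith [hseg]
end

section
/- E[(C·e^{A + B·Z} − K)⁺] = C·e^{A + B²/2}·Φ(x_0 + B) − K·Φ(x_0), where x_0 = (A − ln(K/C))/B, (x)⁺ = max(x, 0), and the expectation is over Z. -/
/-!
Exponential tilting: `e^{tx} N(μ, v)(dx) = e^{μt + vt²/2} N(μ + vt, v)(dx)`. The payoff
`(C e^{A+Bz} − K)⁺` vanishes exactly off `{z ≥ −x₀}`, so its expectation is
`C e^{A+B²/2} P(Z + B ≥ −x₀) − K P(Z ≥ −x₀)`, and by symmetry of `Z` these probabilities are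
`Φ(x₀ + B)` and `Φ(x₀)`.
-/

open MeasureTheory ProbabilityTheory

/-- The standard normal cumulative distribution function `Φ`. -/
noncomputable def stdNormalCDF (x : ℝ) : ℝ := (gaussianReal 0 1 (Set.Iic x)).toReal

open Real Set
open scoped NNReal

section GaussianTilting

variable {μ : ℝ} {v : ℝ≥0}

lemma exp_mul_mul_gaussianPDFReal (t x : ℝ) :
    exp (t * x) * gaussianPDFReal μ v x
      = exp (μ * t + v * t ^ 2 / 2) * gaussianPDFReal (μ + v * t) v x := by
  rcases eq_or_ne v 0 with rfl | hv
  · simp [gaussianPDFReal_zero_var]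
  have hv' : (v : ℝ) ≠ 0 := by exact_mod_cast hv
  simp only [gaussianPDFReal_def]
  rw [mul_left_comm, ← exp_add, mul_left_comm, ← exp_add]
  congr 2
  field_simp
  ring

lemma integral_exp_mul_smul_gaussianReal {E : Type*} [NormedAddCommGroup E] [NormedSpace ℝ E]
    [CompleteSpace E] (t : ℝ) (f : ℝ → E) :
    ∫ x, exp (t * x) • f x ∂gaussianReal μ v
      = exp (μ * t + v * t ^ 2 / 2) • ∫ x, f x ∂gaussianReal (μ + v * t) v := by
  rcases eq_or_ne v 0 with rfl | hv
  · simp [gaussianReal_zero_var, integral_dirac, mul_comm]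
  simp_rw [integral_gaussianReal_eq_integral_smul hv, smul_smul, mul_comm (gaussianPDFReal _ _ _),
    exp_mul_mul_gaussianPDFReal, ← smul_smul, integral_smul]

lemma setIntegral_exp_mul_gaussianReal (t : ℝ) {s : Set ℝ} (hs : MeasurableSet s) :
    ∫ x in s, exp (t * x) ∂gaussianReal μ v
      = exp (μ * t + v * t ^ 2 / 2) * (gaussianReal (μ + v * t) v).real s := by
  have h := integral_exp_mul_smul_gaussianReal (μ := μ) (v := v) t (s.indicator (1 : ℝ → ℝ))
  simp only [smul_eq_mul, integral_indicator_one hs] at h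
  rw [← h, ← integral_indicator hs]
  congr 1 with x
  by_cases hx : x ∈ s <;> simp [hx]

end GaussianTilting

lemma gaussianReal_real_Ici (μ a : ℝ) :
    (gaussianReal μ 1).real (Ici a) = stdNormalCDF (μ - a) := by
  have h := gaussianReal_map_const_sub (μ := 0) (v := 1) μ
  rw [sub_zero] at h
  rw [stdNormalCDF, ← h, measureReal_def, Measure.map_apply (by fun_prop) measurableSet_Ici]
  congr 2 with x
  simp [le_sub_comm]

lemma le_mul_exp_add_mul_iff {A B C K : ℝ} (hB : 0 < B) (hC : 0 < C) (hK : 0 < K) (z : ℝ) :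
    K ≤ C * exp (A + B * z) ↔ (log (K / C) - A) / B ≤ z := by
  rw [div_le_iff₀ hB, sub_le_iff_le_add', log_le_iff_le_exp (div_pos hK hC), div_le_iff₀' hC,
    mul_comm z]

/-- For `Z` standard normal, `E[(C e^{A+BZ} − K)⁺] = C e^{A+B²/2} Φ(x₀+B) − K Φ(x₀)` with
`x₀ = (A − ln(K/C))/B`. -/
theorem lognormal_call_expectation
    (A B C K : ℝ) (hB : 0 < B) (hC : 0 < C) (hK : 0 < K) :
    ∫ z, max (C * Real.exp (A + B * z) - K) 0 ∂(gaussianReal 0 1)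
      = C * Real.exp (A + B ^ 2 / 2) * stdNormalCDF ((A - Real.log (K / C)) / B + B)
        - K * stdNormalCDF ((A - Real.log (K / C)) / B) := by
  set x₀ := (A - log (K / C)) / B with hx₀
  have h_payoff : (fun z ↦ max (C * exp (A + B * z) - K) 0)
      = (Ici (-x₀)).indicator fun z ↦ C * exp A * exp (B * z) - K := by
    ext z
    have h_ex : K ≤ C * exp (A + B * z) ↔ z ∈ Ici (-x₀) := by
      rw [mem_Ici, le_mul_exp_add_mul_iff hB hC hK, hx₀, ← neg_div, neg_sub]
    by_cases hz : z ∈ Ici (-x₀)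
    · rw [indicator_of_mem hz, max_eq_left (sub_nonneg.2 (h_ex.2 hz)), exp_add, mul_assoc]
    · rw [indicator_of_notMem hz, max_eq_right (sub_nonpos.2 (not_le.1 (mt h_ex.1 hz)).le)]
  have h_int : IntegrableOn (fun z ↦ exp (B * z)) (Ici (-x₀)) (gaussianReal 0 1) :=
    (integrable_exp_mul_gaussianReal B).integrableOn
  rw [h_payoff, integral_indicator measurableSet_Ici, integral_sub (h_int.const_mul _)
    (integrable_const K), integral_const_mul, setIntegral_exp_mul_gaussianReal B measurableSet_Ici,
    setIntegral_const, gaussianReal_real_Ici, gaussianReal_real_Ici]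
  simp only [NNReal.coe_one, zero_mul, zero_add, one_mul, smul_eq_mul,
    sub_neg_eq_add, add_comm B, exp_add]
  ring
end

section
/- For every S > 0, the distribution function of the terminal price under counterparty risk is P(S_T ≤ S) = e^{−λT}·Φ( (ln(S/S_0) − a(T)) / b(T) ) + Σ_{i=1}^{3} p_i ∫_0^T λ e^{−λt} Φ( (1/b(t))·( ln( S/(S_0(1−γ_i)) ) − a(t) ) ) dt. -/
open MeasureTheory ProbabilityTheory

/-!
Split according to whether default happens before maturity. On `{T ≤ τ}` the price is a
lognormal function of `Z₁` alone and `τ` is independent of `Z₁`, which gives the first term.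
On `{τ < T}` condition on `(τ, γ)`, which is independent of `(Z₁, Z₂)`: for `τ = t` and
`γ = γᵢ` the event `S_T ≤ S` is the half-plane
`σ₁√t Z₁ + σ₂√(T - t) Z₂ ≤ log (S / (S₀(1 - γᵢ))) - a(t)`, and `σ₁√t Z₁ + σ₂√(T - t) Z₂` is a
centred Gaussian of variance `b(t)²`. Integrating this against the law
`λ e^{-λt} dt ⊗ Σ pᵢ δ_{γᵢ}` of `(τ, γ)` gives the second term.
-/

open Set Real
open scoped ENNReal

lemma stdNormalCDF_eq_cdf : stdNormalCDF = cdf (gaussianReal 0 1) := by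
  ext x
  rw [cdf_eq_real]
  rfl

lemma ofReal_stdNormalCDF (x : ℝ) :
    ENNReal.ofReal (stdNormalCDF x) = gaussianReal 0 1 (Iic x) := by
  rw [stdNormalCDF_eq_cdf, ofReal_cdf]

lemma stdNormalCDF_nonneg (x : ℝ) : 0 ≤ stdNormalCDF x :=
  stdNormalCDF_eq_cdf ▸ cdf_nonneg _ x

lemma stdNormalCDF_le_one (x : ℝ) : stdNormalCDF x ≤ 1 :=
  stdNormalCDF_eq_cdf ▸ cdf_le_one _ x

lemma measurable_stdNormalCDF : Measurable stdNormalCDF :=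
  stdNormalCDF_eq_cdf ▸ (monotone_cdf _).measurable

lemma gaussianReal_setOf_mul_le {c : ℝ} (hc : 0 < c) (u : ℝ) :
    gaussianReal 0 1 {x | c * x ≤ u} = ENNReal.ofReal (stdNormalCDF (u / c)) := by
  simp_rw [ofReal_stdNormalCDF, ← le_div_iff₀' hc]
  rfl

lemma map_mul_add_mul_gaussianReal_prod (c₁ c₂ : ℝ) :
    ((gaussianReal 0 1).prod (gaussianReal 0 1)).map (fun z : ℝ × ℝ ↦ c₁ * z.1 + c₂ * z.2)
      = (gaussianReal 0 1).map (√(c₁ ^ 2 + c₂ ^ 2) * ·) := by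
  have hcomp : (fun z : ℝ × ℝ ↦ c₁ * z.1 + c₂ * z.2)
      = (fun z : ℝ × ℝ ↦ z.1 + z.2) ∘ Prod.map (c₁ * ·) (c₂ * ·) := rfl
  rw [hcomp, ← Measure.map_map (by fun_prop) (by fun_prop),
    ← Measure.map_prod_map _ _ (by fun_prop) (by fun_prop)]
  change (gaussianReal 0 1).map (c₁ * ·) ∗ (gaussianReal 0 1).map (c₂ * ·) = _
  simp only [gaussianReal_map_const_mul, gaussianReal_conv_gaussianReal, mul_zero, mul_one,
    add_zero]
  congr 1
  ext
  simp [sq_sqrt (by positivity : (0 : ℝ) ≤ c₁ ^ 2 + c₂ ^ 2)]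

lemma gaussianReal_prod_setOf_le {c₁ c₂ : ℝ} (hc : c₁ ^ 2 + c₂ ^ 2 ≠ 0) (u : ℝ) :
    ((gaussianReal 0 1).prod (gaussianReal 0 1)) {z | c₁ * z.1 + c₂ * z.2 ≤ u}
      = ENNReal.ofReal (stdNormalCDF (u / √(c₁ ^ 2 + c₂ ^ 2))) := by
  have hρ : 0 < √(c₁ ^ 2 + c₂ ^ 2) := sqrt_pos.2 (lt_of_le_of_ne (by positivity) hc.symm)
  calc ((gaussianReal 0 1).prod (gaussianReal 0 1)) {z | c₁ * z.1 + c₂ * z.2 ≤ u}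
      = (((gaussianReal 0 1).prod (gaussianReal 0 1)).map
          (fun z : ℝ × ℝ ↦ c₁ * z.1 + c₂ * z.2)) (Iic u) := by
        rw [Measure.map_apply (by fun_prop) measurableSet_Iic]
        rfl
    _ = gaussianReal 0 1 {x | √(c₁ ^ 2 + c₂ ^ 2) * x ≤ u} := by
        rw [map_mul_add_mul_gaussianReal_prod,
          Measure.map_apply (measurable_const_mul _) measurableSet_Iic]
        rfl
    _ = _ := gaussianReal_setOf_mul_le hρ u

lemma mul_exp_le_iff_le_log {K S x : ℝ} (hK : 0 < K) (hS : 0 < S) :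
    K * exp x ≤ S ↔ x ≤ log (S / K) := by
  rw [le_log_iff_exp_le (div_pos hS hK), le_div_iff₀' hK]

lemma gaussianReal_setOf_mul_exp_le {K S c : ℝ} (hK : 0 < K) (hS : 0 < S) (hc : 0 < c) (α : ℝ) :
    gaussianReal 0 1 {x | K * exp (α + c * x) ≤ S}
      = ENNReal.ofReal (stdNormalCDF ((log (S / K) - α) / c)) := by
  simp_rw [mul_exp_le_iff_le_log hK hS, ← le_sub_iff_add_le']
  exact gaussianReal_setOf_mul_le hc _

lemma gaussianReal_prod_setOf_mul_exp_le {K S c₁ c₂ : ℝ} (hK : 0 < K) (hS : 0 < S)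
    (hc : c₁ ^ 2 + c₂ ^ 2 ≠ 0) (α : ℝ) :
    ((gaussianReal 0 1).prod (gaussianReal 0 1)) {z | K * exp (α + c₁ * z.1 + c₂ * z.2) ≤ S}
      = ENNReal.ofReal (stdNormalCDF ((log (S / K) - α) / √(c₁ ^ 2 + c₂ ^ 2))) := by
  have hset : {z : ℝ × ℝ | K * exp (α + c₁ * z.1 + c₂ * z.2) ≤ S}
      = {z | c₁ * z.1 + c₂ * z.2 ≤ log (S / K) - α} := by
    ext z
    exact (mul_exp_le_iff_le_log hK hS).trans (by rw [add_assoc]; exact le_sub_iff_add_le'.symm)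
  rw [hset, gaussianReal_prod_setOf_le hc]

lemma expMeasure_Iic_zero {r : ℝ} (hr : 0 < r) : expMeasure r (Iic 0) = 0 := by
  have := isProbabilityMeasure_expMeasure hr
  simp [← ofReal_cdf, cdf_expMeasure_eq hr]

lemma expMeasure_Ici {r x : ℝ} (hr : 0 < r) (hx : 0 ≤ x) :
    expMeasure r (Ici x) = ENNReal.ofReal (exp (-r * x)) := by
  have := isProbabilityMeasure_expMeasure hr
  have hatom : expMeasure r {x} = 0 :=
    withDensity_absolutelyContinuous _ _ (Real.volume_singleton)
  rw [← compl_Iio, prob_compl_eq_one_sub measurableSet_Iio, measure_congr (Iio_ae_eq_Iic' hatom),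
    ← ofReal_cdf, cdf_expMeasure_eq hr, if_pos hx, ← ENNReal.ofReal_one,
    ← ENNReal.ofReal_sub _ (sub_nonneg.2 (exp_le_one_iff.2 (by nlinarith))), sub_sub_cancel,
    neg_mul]

lemma lintegral_expMeasure_eq_intervalIntegral {r T : ℝ} (hr : 0 < r) (hT : 0 ≤ T)
    {G : ℝ → ℝ≥0∞} {φ : ℝ → ℝ} (hφ : Measurable φ) (hφ0 : ∀ t, 0 ≤ φ t) (hφ1 : ∀ t, φ t ≤ 1)
    (hGφ : EqOn G (fun t ↦ ENNReal.ofReal (φ t)) (Ioo 0 T)) (hG : ∀ t, T ≤ t → G t = 0) :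
    ∫⁻ t, G t ∂expMeasure r = ENNReal.ofReal (∫ t in 0..T, r * exp (-r * t) * φ t) := by
  have hpos : ∀ᵐ t ∂expMeasure r, 0 < t := by
    rw [ae_iff]
    simp only [not_lt]
    exact expMeasure_Iic_zero hr
  have hint : IntegrableOn (fun t ↦ r * exp (-r * t) * φ t) (Ioo 0 T) := by
    refine Measure.integrableOn_of_bounded (M := r) measure_Ioo_lt_top.ne (by fun_prop) ?_
    filter_upwards [ae_restrict_mem measurableSet_Ioo] with t ht
    have := hφ0 t
    rw [Real.norm_eq_abs, abs_of_nonneg (by positivity)]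
    calc r * exp (-r * t) * φ t ≤ r * 1 * 1 := by
          gcongr
          · exact exp_le_one_iff.2 (by nlinarith [ht.1])
          · exact hφ1 t
      _ = r := by ring
  calc ∫⁻ t, G t ∂expMeasure r
      = ∫⁻ t in Ioo 0 T, ENNReal.ofReal (φ t) ∂expMeasure r := by
        rw [← lintegral_indicator measurableSet_Ioo]
        refine lintegral_congr_ae (hpos.mono fun t ht ↦ ?_)
        by_cases htT : t < T
        · have hmem : t ∈ Ioo 0 T := ⟨ht, htT⟩
          rw [indicator_of_mem hmem, hGφ hmem]
        · rw [indicator_of_notMem fun h ↦ htT h.2, hG t (not_lt.1 htT)]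
    _ = ∫⁻ t in Ioo 0 T, ENNReal.ofReal (r * exp (-r * t) * φ t) := by
        change ∫⁻ t in Ioo 0 T, _ ∂volume.withDensity (exponentialPDF r) = _
        rw [setLIntegral_withDensity_eq_setLIntegral_mul _
          (f := exponentialPDF r) (measurable_exponentialPDFReal r).ennreal_ofReal (by fun_prop)
          measurableSet_Ioo]
        refine setLIntegral_congr_fun measurableSet_Ioo fun t ht ↦ ?_
        rw [Pi.mul_apply, exponentialPDF_of_nonneg ht.1.le, ← ENNReal.ofReal_mul (by positivity),
          neg_mul]
    _ = _ := by
        rw [← ofReal_integral_eq_lintegral_ofReal hint (ae_of_all _ fun t ↦ ?_),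
          intervalIntegral.integral_of_le hT, integral_Ioc_eq_integral_Ioo]
        have := hφ0 t
        positivity

lemma ProbabilityTheory.iIndepFun.map_prodMk_prodMk_eq_prod {Ω β : Type*} [MeasurableSpace Ω]
    [MeasurableSpace β] {P : Measure Ω} [IsProbabilityMeasure P] {X : Fin 4 → Ω → β}
    (h : iIndepFun X P)
    (hX : ∀ i, Measurable (X i)) :
    P.map (fun ω ↦ ((X 0 ω, X 1 ω), (X 2 ω, X 3 ω)))
      = ((P.map (X 0)).prod (P.map (X 1))).prod ((P.map (X 2)).prod (P.map (X 3))) := by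
  rw [(h.indepFun_prodMk_prodMk hX 0 1 2 3 (by decide) (by decide) (by decide) (by decide)
      ).map_prod_eq_prod_map_map ((hX 0).prodMk (hX 1)).aemeasurable
        ((hX 2).prodMk (hX 3)).aemeasurable,
    (h.indepFun (by decide : (0 : Fin 4) ≠ 1)).map_prod_eq_prod_map_map (hX 0).aemeasurable
      (hX 1).aemeasurable,
    (h.indepFun (by decide : (2 : Fin 4) ≠ 3)).map_prod_eq_prod_map_map (hX 2).aemeasurable
      (hX 3).aemeasurable]

lemma lintegral_prod_sum_dirac {α β ι : Type*} [MeasurableSpace α] [MeasurableSpace β]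
    [MeasurableSingletonClass β] [Fintype ι] {μ : Measure α} [SFinite μ] (w : ι → ℝ≥0∞)
    (y : ι → β) {f : α × β → ℝ≥0∞} (hf : Measurable f) :
    ∫⁻ q, f q ∂μ.prod (∑ i, w i • Measure.dirac (y i)) = ∑ i, w i * ∫⁻ x, f (x, y i) ∂μ := by
  have : SFinite (∑ i, w i • Measure.dirac (y i)) := by
    rw [← Measure.sum_fintype]
    infer_instance
  rw [lintegral_prod _ hf.aemeasurable]
  simp_rw [lintegral_finsetSum_measure, lintegral_smul_measure, lintegral_dirac, smul_eq_mul]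
  have hslice (i : ι) : Measurable fun x ↦ f (x, y i) :=
    hf.comp (measurable_id.prodMk measurable_const)
  rw [lintegral_finsetSum _ fun i _ ↦ (hslice i).const_mul _]
  exact Finset.sum_congr rfl fun i _ ↦ lintegral_const_mul _ (hslice i)

lemma measureReal_noDefault_price_le {Ω : Type*} [MeasurableSpace Ω] {P : Measure Ω}
    {τ Z : Ω → ℝ} (hτ : Measurable τ) (hZ : Measurable Z) (hτZ : IndepFun τ Z P) {lam : ℝ}
    (hlam : 0 < lam) (hτlaw : P.map τ = expMeasure lam) (hZlaw : P.map Z = gaussianReal 0 1)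
    {S₀ S T c : ℝ} (hS₀ : 0 < S₀) (hS : 0 < S) (hT : 0 ≤ T) (hc : 0 < c) (α : ℝ) :
    P.real (τ ⁻¹' Ici T ∩ {ω | S₀ * exp (α + c * Z ω) ≤ S})
      = exp (-lam * T) * stdNormalCDF ((log (S / S₀) - α) / c) := by
  change (P (τ ⁻¹' Ici T ∩ Z ⁻¹' {x | S₀ * exp (α + c * x) ≤ S})).toReal = _
  have hmeas : MeasurableSet {x | S₀ * exp (α + c * x) ≤ S} :=
    measurableSet_le (by fun_prop) (by fun_prop)
  rw [hτZ.measure_inter_preimage_eq_mul _ _ measurableSet_Ici hmeas,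
    ← Measure.map_apply hτ measurableSet_Ici, ← Measure.map_apply hZ hmeas, hτlaw, hZlaw,
    expMeasure_Ici hlam hT,
    gaussianReal_setOf_mul_exp_le hS₀ hS hc, ← ENNReal.ofReal_mul (exp_pos _).le,
    ENNReal.toReal_ofReal (mul_nonneg (exp_pos _).le (stdNormalCDF_nonneg _))]

lemma gaussianReal_prod_setOf_defaultPrice_le {S₀ S T σ₁ σ₂ t y α : ℝ} (hS₀ : 0 < S₀)
    (hS : 0 < S) (hσ₁ : σ₁ ≠ 0) (hy : y < 1) (ht : 0 < t) (htT : t ≤ T) :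
    ((gaussianReal 0 1).prod (gaussianReal 0 1))
        {z | S₀ * (1 - y) * exp (α + σ₁ * √t * z.1 + σ₂ * √(T - t) * z.2) ≤ S}
      = ENNReal.ofReal (stdNormalCDF
          ((1 / √(σ₁ ^ 2 * t + σ₂ ^ 2 * (T - t))) * (log (S / (S₀ * (1 - y))) - α))) := by
  have hvar : (σ₁ * √t) ^ 2 + (σ₂ * √(T - t)) ^ 2 = σ₁ ^ 2 * t + σ₂ ^ 2 * (T - t) := by
    rw [mul_pow, mul_pow, sq_sqrt ht.le, sq_sqrt (sub_nonneg.2 htT)]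
  have hpos : 0 < σ₁ ^ 2 * t + σ₂ ^ 2 * (T - t) :=
    add_pos_of_pos_of_nonneg (by positivity) (mul_nonneg (sq_nonneg _) (sub_nonneg.2 htT))
  rw [gaussianReal_prod_setOf_mul_exp_le (mul_pos hS₀ (sub_pos.2 hy)) hS (hvar ▸ hpos.ne'), hvar,
    one_div_mul_eq_div]

lemma measureReal_default_price_le {Ω ι : Type*} [MeasurableSpace Ω] [Fintype ι] {P : Measure Ω}
    {τ γ Z₁ Z₂ : Ω → ℝ} (hτ : Measurable τ) (hγ : Measurable γ) (hZ₁ : Measurable Z₁)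
    (hZ₂ : Measurable Z₂) {lam : ℝ} (hlam : 0 < lam) {γv p : ι → ℝ} (hγv : ∀ i, γv i < 1)
    (hp : ∀ i, 0 ≤ p i)
    (hlaw : P.map (fun ω ↦ ((τ ω, γ ω), (Z₁ ω, Z₂ ω)))
      = ((expMeasure lam).prod (∑ i, ENNReal.ofReal (p i) • Measure.dirac (γv i))).prod
          ((gaussianReal 0 1).prod (gaussianReal 0 1)))
    {S₀ S T σ₁ σ₂ : ℝ} (hS₀ : 0 < S₀) (hS : 0 < S) (hT : 0 ≤ T) (hσ₁ : σ₁ ≠ 0)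
    {a : ℝ → ℝ} (ha : Measurable a) :
    P.real {ω | τ ω < T ∧
        S₀ * (1 - γ ω) * exp (a (τ ω) + σ₁ * √(τ ω) * Z₁ ω + σ₂ * √(T - τ ω) * Z₂ ω) ≤ S}
      = ∑ i, p i * ∫ t in 0..T, lam * exp (-lam * t) * stdNormalCDF
          ((1 / √(σ₁ ^ 2 * t + σ₂ ^ 2 * (T - t))) * (log (S / (S₀ * (1 - γv i))) - a t)) := by
  have := isProbabilityMeasure_expMeasure hlam
  set C : Set ((ℝ × ℝ) × ℝ × ℝ) := {q | q.1.1 < T ∧ S₀ * (1 - q.1.2) *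
    exp (a q.1.1 + σ₁ * √q.1.1 * q.2.1 + σ₂ * √(T - q.1.1) * q.2.2) ≤ S}
  have hC : MeasurableSet C := by
    simp only [C, ofPred_and]
    exact (measurableSet_lt (by fun_prop) (by fun_prop)).inter
      (measurableSet_le (by fun_prop) (by fun_prop))
  set φ : ι → ℝ → ℝ := fun i t ↦ stdNormalCDF
    ((1 / √(σ₁ ^ 2 * t + σ₂ ^ 2 * (T - t))) * (log (S / (S₀ * (1 - γv i))) - a t))
  have hslice (i : ι) :
      ∫⁻ t, (gaussianReal 0 1).prod (gaussianReal 0 1) (Prod.mk (t, γv i) ⁻¹' C) ∂expMeasure lam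
        = ENNReal.ofReal (∫ t in 0..T, lam * exp (-lam * t) * φ i t) := by
    refine lintegral_expMeasure_eq_intervalIntegral hlam hT ?_ (fun t ↦ stdNormalCDF_nonneg _)
      (fun t ↦ stdNormalCDF_le_one _) (fun t ht ↦ ?_) (fun t htT ↦ ?_)
    · exact measurable_stdNormalCDF.comp (by fun_prop)
    · have hsec : Prod.mk (t, γv i) ⁻¹' C = {z | S₀ * (1 - γv i) *
          exp (a t + σ₁ * √t * z.1 + σ₂ * √(T - t) * z.2) ≤ S} := by
        ext z
        simp [C, ht.2]
      rw [hsec]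
      exact gaussianReal_prod_setOf_defaultPrice_le hS₀ hS hσ₁ (hγv i) ht.1 ht.2.le
    · simp [C, not_lt.2 htT]
  have hint (i : ι) : 0 ≤ ∫ t in 0..T, lam * exp (-lam * t) * φ i t :=
    intervalIntegral.integral_nonneg hT fun t _ ↦ by
      have : 0 ≤ φ i t := stdNormalCDF_nonneg _
      positivity
  change (P ((fun ω ↦ ((τ ω, γ ω), (Z₁ ω, Z₂ ω))) ⁻¹' C)).toReal = _
  rw [← Measure.map_apply (by fun_prop) hC, hlaw, Measure.prod_apply hC,
    lintegral_prod_sum_dirac _ _ (measurable_measure_prodMk_left hC)]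
  simp_rw [hslice, ← ENNReal.ofReal_mul (hp _)]
  rw [← ENNReal.ofReal_sum_of_nonneg fun i _ ↦ mul_nonneg (hp i) (hint i),
    ENNReal.toReal_ofReal (Finset.sum_nonneg fun i _ ↦ mul_nonneg (hp i) (hint i))]

theorem counterparty_terminal_distribution_general
    {Ω : Type*} [MeasurableSpace Ω] (P : Measure Ω) [IsProbabilityMeasure P]
    (τ γ Z₁ Z₂ : Ω → ℝ)
    (hτm : Measurable τ) (hγm : Measurable γ) (hZ₁m : Measurable Z₁) (hZ₂m : Measurable Z₂)
    (hindep : iIndepFun ![τ, γ, Z₁, Z₂] P)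
    (S₀ T σ₁ σ₂ lam : ℝ) (hS₀ : 0 < S₀) (hT : 0 < T) (hσ₁ : 0 < σ₁)
    (hlam : 0 < lam) (r : ℝ)
    (γv : Fin 3 → ℝ) (hγv : ∀ i, γv i < 1)
    (p : Fin 3 → ℝ) (hp : ∀ i, 0 ≤ p i)
    (hτlaw : Measure.map τ P = expMeasure lam)
    (hγlaw : Measure.map γ P = ∑ i, ENNReal.ofReal (p i) • Measure.dirac (γv i))
    (hZ₁law : Measure.map Z₁ P = gaussianReal 0 1)
    (hZ₂law : Measure.map Z₂ P = gaussianReal 0 1)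
    (m : ℝ)
    (a b : ℝ → ℝ)
    (ha : ∀ t, a t = (r + lam * m - σ₁ ^ 2 / 2) * t + (r - σ₂ ^ 2 / 2) * (T - t))
    (hb : ∀ t, b t = Real.sqrt (σ₁ ^ 2 * t + σ₂ ^ 2 * (T - t)))
    (ST : Ω → ℝ)
    (hST : ∀ ω, ST ω =
      if T ≤ τ ω then
        S₀ * Real.exp ((r + lam * m - σ₁ ^ 2 / 2) * T + σ₁ * Real.sqrt T * Z₁ ω)
      else
        S₀ * (1 - γ ω) * Real.exp (a (τ ω) + σ₁ * Real.sqrt (τ ω) * Z₁ ω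
          + σ₂ * Real.sqrt (T - τ ω) * Z₂ ω))
    : ∀ S : ℝ, 0 < S →
      (P {ω | ST ω ≤ S}).toReal
        = Real.exp (-lam * T) * stdNormalCDF ((Real.log (S / S₀) - a T) / b T)
          + ∑ i, p i * ∫ t in (0:ℝ)..T, lam * Real.exp (-lam * t) *
              stdNormalCDF ((1 / b t) * (Real.log (S / (S₀ * (1 - γv i))) - a t)) := by
  intro S hS
  have hlaw := hindep.map_prodMk_prodMk_eq_prod fun i ↦ by fin_cases i <;> assumption
  simp only [Matrix.cons_val_zero, Matrix.cons_val_one, Matrix.cons_val] at hlaw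
  rw [hτlaw, hγlaw, hZ₁law, hZ₂law] at hlaw
  have ham : Measurable a := funext ha ▸ by fun_prop
  have haT : a T = (r + lam * m - σ₁ ^ 2 / 2) * T := by rw [ha]; ring
  have hbT : b T = σ₁ * √T := by
    rw [hb, sub_self, mul_zero, add_zero, sqrt_mul (sq_nonneg _), sqrt_sq hσ₁.le]
  have hnoDefault : {ω | ST ω ≤ S} ∩ τ ⁻¹' Ici T = τ ⁻¹' Ici T ∩
      {ω | S₀ * exp ((r + lam * m - σ₁ ^ 2 / 2) * T + σ₁ * √T * Z₁ ω) ≤ S} := by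
    ext ω
    by_cases h : T ≤ τ ω <;> simp [hST, h]
  have hdefault : {ω | ST ω ≤ S} \ τ ⁻¹' Ici T = {ω | τ ω < T ∧ S₀ * (1 - γ ω) *
      exp (a (τ ω) + σ₁ * √(τ ω) * Z₁ ω + σ₂ * √(T - τ ω) * Z₂ ω) ≤ S} := by
    ext ω
    by_cases h : T ≤ τ ω
    · simp [hST, h]
    · simp [hST, h, not_le.1 h]
  rw [← measureReal_def, ← measureReal_inter_add_sdiff (hτm measurableSet_Ici), hnoDefault,
    hdefault,
    measureReal_noDefault_price_le hτm hZ₁m (hindep.indepFun (by decide : (0 : Fin 4) ≠ 2)) hlam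
      hτlaw hZ₁law hS₀ hS hT.le (by positivity),
    measureReal_default_price_le hτm hγm hZ₁m hZ₂m hlam hγv hp hlaw hS₀ hS hT.le hσ₁.ne' ham]
  simp only [haT, hbT, hb]

/-- Distribution function of the terminal price under counterparty risk:
`P(S_T ≤ S) = e^{−λT} Φ((ln(S/S₀) − a(T))/b(T))
  + Σ_i p_i ∫_0^T λ e^{−λt} Φ((1/b(t))(ln(S/(S₀(1−γ_i))) − a(t))) dt`. -/
theorem counterparty_terminal_distribution
    {Ω : Type*} [MeasurableSpace Ω] (P : Measure Ω) [IsProbabilityMeasure P]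
    (τ γ Z₁ Z₂ : Ω → ℝ)
    (hτm : Measurable τ) (hγm : Measurable γ) (hZ₁m : Measurable Z₁) (hZ₂m : Measurable Z₂)
    (hindep : iIndepFun ![τ, γ, Z₁, Z₂] P)
    (S₀ T σ₁ σ₂ lam : ℝ) (hS₀ : 0 < S₀) (hT : 0 < T) (hσ₁ : 0 < σ₁) (hσ₂ : 0 < σ₂)
    (hlam : 0 < lam) (r : ℝ)
    (γv : Fin 3 → ℝ) (hγv : ∀ i, γv i < 1)
    (p : Fin 3 → ℝ) (hp : ∀ i, 0 ≤ p i) (hps : ∑ i, p i = 1)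
    (hτlaw : Measure.map τ P = expMeasure lam)
    (hγlaw : Measure.map γ P = ∑ i, ENNReal.ofReal (p i) • Measure.dirac (γv i))
    (hZ₁law : Measure.map Z₁ P = gaussianReal 0 1)
    (hZ₂law : Measure.map Z₂ P = gaussianReal 0 1)
    (m : ℝ) (hm : m = ∑ i, p i * γv i)
    (a b : ℝ → ℝ)
    (ha : ∀ t, a t = (r + lam * m - σ₁ ^ 2 / 2) * t + (r - σ₂ ^ 2 / 2) * (T - t))
    (hb : ∀ t, b t = Real.sqrt (σ₁ ^ 2 * t + σ₂ ^ 2 * (T - t)))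
    (ST : Ω → ℝ)
    (hST : ∀ ω, ST ω =
      if T ≤ τ ω then
        S₀ * Real.exp ((r + lam * m - σ₁ ^ 2 / 2) * T + σ₁ * Real.sqrt T * Z₁ ω)
      else
        S₀ * (1 - γ ω) * Real.exp (a (τ ω) + σ₁ * Real.sqrt (τ ω) * Z₁ ω
          + σ₂ * Real.sqrt (T - τ ω) * Z₂ ω))
    : ∀ S : ℝ, 0 < S →
      (P {ω | ST ω ≤ S}).toReal
        = Real.exp (-lam * T) * stdNormalCDF ((Real.log (S / S₀) - a T) / b T)
          + ∑ i, p i * ∫ t in (0:ℝ)..T, lam * Real.exp (-lam * t) *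
              stdNormalCDF ((1 / b t) * (Real.log (S / (S₀ * (1 - γv i))) - a t)) :=
  counterparty_terminal_distribution_general P τ γ Z₁ Z₂ hτm hγm hZ₁m hZ₂m hindep S₀ T σ₁ σ₂ lam hS₀
    hT hσ₁ hlam r γv hγv p hp hτlaw hγlaw hZ₁law hZ₂law m a b ha hb ST hST
end
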